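/- arXiv:2307.13420 — 8 statements merged into one kernel-verified Lean document; each statement's English description precedes it below -/
import Mathlib

section
/- Let A = (a_1, …, a_k) and B = (b_1, …, b_l) be finite nondecreasing tuples of positive integers (equivalently, finite multisets of positive integers). If ∑_{i=1}^{k} gcd(a_i, n) = ∑_{j=1}^{l} gcd(b_j, n) for every positive integer n, then k = l and A = B as multisets. -/
/-!
Since `gcd a n = ∑_{d ∣ gcd a n} φ d`, the gcd-sum of `A` at `n` is
`∑_{d ∣ n} φ d · #{a ∈ A | d ∣ a}`. Divisor sums determine a function on the positive integers
(strong induction on `n`), and `φ d > 0`, so the gcd-sums determine every count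
`#{a ∈ A | d ∣ a}`. These counts determine a multiset of positive integers: for the largest
element `m` of `A + B`, the count at `m` is the multiplicity of `m`, so `m` can be removed from both
sides.
-/

open scoped Nat

theorem Nat.gcd_eq_sum_totient_filter_dvd {n : ℕ} (hn : n ≠ 0) (a : ℕ) :
    Nat.gcd a n = ∑ d ∈ n.divisors with d ∣ a, φ d := by
  have hdvd : ∀ d ∈ n.divisors, d ∣ a ↔ d ∣ Nat.gcd a n := fun d hd =>
    ⟨fun hda => Nat.dvd_gcd hda (Nat.dvd_of_mem_divisors hd), fun h => h.trans (Nat.gcd_dvd_left a n)⟩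
  rw [Finset.filter_congr hdvd, Nat.divisors_filter_dvd_of_dvd hn (Nat.gcd_dvd_right a n),
    Nat.sum_totient]

theorem Multiset.sum_map_gcd_eq_sum_totient_mul_countP (A : Multiset ℕ) {n : ℕ} (hn : n ≠ 0) :
    (A.map fun a => Nat.gcd a n).sum = ∑ d ∈ n.divisors, φ d * A.countP (d ∣ ·) := by
  induction A using Multiset.induction with
  | empty => simp
  | cons a A ih =>
    rw [Multiset.map_cons, Multiset.sum_cons, ih, Nat.gcd_eq_sum_totient_filter_dvd hn a]
    simp only [Finset.sum_filter, Multiset.countP_cons, mul_add, mul_ite, mul_one, mul_zero,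
      Finset.sum_add_distrib, add_comm]

theorem Nat.eq_of_sum_divisors_eq {M : Type*} [AddCancelCommMonoid M] {f g : ℕ → M}
    (h : ∀ n, 0 < n → ∑ d ∈ n.divisors, f d = ∑ d ∈ n.divisors, g d) {n : ℕ} (hn : 0 < n) :
    f n = g n := by
  induction n using Nat.strong_induction_on with
  | _ n ih =>
    have hproper : ∑ d ∈ n.properDivisors, f d = ∑ d ∈ n.properDivisors, g d :=
      Finset.sum_congr rfl fun d hd =>
        ih d (Nat.mem_properDivisors.1 hd).2 (Nat.pos_of_mem_properDivisors hd)
    have hsum := h n hn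
    rw [← Nat.cons_self_properDivisors hn.ne', Finset.sum_cons, Finset.sum_cons, hproper] at hsum
    exact add_right_cancel hsum

theorem Multiset.countP_dvd_eq_of_sum_map_gcd_eq {A B : Multiset ℕ}
    (h : ∀ n, 0 < n → (A.map fun a => Nat.gcd a n).sum = (B.map fun b => Nat.gcd b n).sum)
    {d : ℕ} (hd : 0 < d) : A.countP (d ∣ ·) = B.countP (d ∣ ·) := by
  refine Nat.eq_of_mul_eq_mul_left (Nat.totient_pos.2 hd) ?_
  refine Nat.eq_of_sum_divisors_eq (f := fun k => φ k * A.countP (k ∣ ·))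
    (g := fun k => φ k * B.countP (k ∣ ·)) (fun n hn => ?_) hd
  rw [← Multiset.sum_map_gcd_eq_sum_totient_mul_countP A hn.ne',
    ← Multiset.sum_map_gcd_eq_sum_totient_mul_countP B hn.ne', h n hn]

theorem Multiset.countP_dvd_eq_count_of_forall_le {A : Multiset ℕ} (hA : ∀ a ∈ A, 0 < a)
    {m : ℕ} (hm : ∀ a ∈ A, a ≤ m) : A.countP (m ∣ ·) = A.count m := by
  rw [Multiset.count_eq_card_filter_eq, ← Multiset.countP_eq_card_filter]
  refine Multiset.countP_congr rfl fun a ha => propext ⟨fun hma => ?_, fun hma => hma ▸ dvd_rfl⟩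
  exact le_antisymm (Nat.le_of_dvd (hA a ha) hma) (hm a ha)

theorem Multiset.eq_of_countP_dvd_eq {A B : Multiset ℕ} (hA : ∀ a ∈ A, 0 < a)
    (hB : ∀ b ∈ B, 0 < b) (h : ∀ d, 0 < d → A.countP (d ∣ ·) = B.countP (d ∣ ·)) : A = B := by
  induction A using Multiset.strongInductionOn generalizing B with
  | ih A ih =>
    rcases eq_or_ne (A + B) 0 with hAB | hAB
    · obtain ⟨rfl, rfl⟩ := add_eq_zero.1 hAB
      rfl
    obtain ⟨m, hmAB, hmax⟩ := Multiset.exists_max_image id hAB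
    have hAm : ∀ a ∈ A, a ≤ m := fun a ha => hmax a (Multiset.mem_add.2 (Or.inl ha))
    have hBm : ∀ b ∈ B, b ≤ m := fun b hb => hmax b (Multiset.mem_add.2 (Or.inr hb))
    have hm : 0 < m := (Multiset.mem_add.1 hmAB).elim (hA m) (hB m)
    have hcount : A.count m = B.count m := by
      rw [← Multiset.countP_dvd_eq_count_of_forall_le hA hAm,
        ← Multiset.countP_dvd_eq_count_of_forall_le hB hBm, h m hm]
    have hmA : m ∈ A := by
      rcases Multiset.mem_add.1 hmAB with hmA | hmB
      · exact hmA
      · rw [← Multiset.count_pos, hcount]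
        exact Multiset.count_pos.2 hmB
    have hmB : m ∈ B := by
      rw [← Multiset.count_pos, ← hcount]
      exact Multiset.count_pos.2 hmA
    rw [← Multiset.cons_erase hmA, ← Multiset.cons_erase hmB] at h ⊢
    refine congrArg (m ::ₘ ·) (ih _ (Multiset.erase_lt.2 hmA)
      (fun a ha => hA a (Multiset.mem_of_mem_erase ha))
      (fun b hb => hB b (Multiset.mem_of_mem_erase hb)) fun d hd => ?_)
    simpa only [Multiset.countP_cons, Nat.add_right_cancel_iff] using h d hd

/-- **Gcd-sum rigidity for multisets of positive integers.**
If two finite multisets `A`, `B` of positive integers satisfy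
`∑_{a ∈ A} gcd(a, n) = ∑_{b ∈ B} gcd(b, n)` for every positive integer `n`,
then `A = B` (in particular they have the same cardinality). -/
theorem gcd_sum_multiset_eq (A B : Multiset ℕ)
    (hA : ∀ a ∈ A, 0 < a) (hB : ∀ b ∈ B, 0 < b)
    (h : ∀ n : ℕ, 0 < n →
      (A.map fun a => Nat.gcd a n).sum = (B.map fun b => Nat.gcd b n).sum) :
    Multiset.card A = Multiset.card B ∧ A = B := by
  have hAB : A = B :=
    Multiset.eq_of_countP_dvd_eq hA hB fun _ hd => Multiset.countP_dvd_eq_of_sum_map_gcd_eq h hd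
  exact ⟨congrArg Multiset.card hAB, hAB⟩
end

section
/- Let F : X → Y be a branched function with index function ind_F. Then for every f ∈ C_c(X): for each y ∈ Y the set F⁻¹(y) ∩ supp(f) is finite, so Φ(f)(y) = ∑_{x ∈ F⁻¹(y)} ind_F(x)·f(x) is a finite sum; the resulting function Φ(f) : Y → ℂ is continuous; and its support is contained in the compact set F(supp(f)). In particular Φ(f) ∈ C_c(Y). -/
open Filter Topology

/-- `F` admits a system of inverse branches centered at `x`, relative to the index
function `ind`. -/
def BranchedAt {X Y : Type*} [TopologicalSpace X] [TopologicalSpace Y]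
    (F : X → Y) (ind : X → ℕ) (x : X) : Prop :=
  ∃ (U : Set X) (V : Set Y) (g : Fin (ind x) → Y → X),
    IsOpen U ∧ x ∈ U ∧ IsOpen V ∧ F x ∈ V ∧
    (∀ i, ∀ v ∈ V, g i v ∈ U) ∧
    (∀ i, ∀ v ∈ V, F (g i v) = v) ∧
    (∀ i, g i (F x) = x) ∧
    (∀ i, ContinuousWithinAt (g i) V (F x)) ∧
    (U = ⋃ i, g i '' V) ∧
    (∀ u ∈ U, ind u = Nat.card {i : Fin (ind x) // u ∈ g i '' V})

/-- `F` is a branched function with index function `ind`. -/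
def IsBranched {X Y : Type*} [TopologicalSpace X] [TopologicalSpace Y]
    (F : X → Y) (ind : X → ℕ) : Prop :=
  Continuous F ∧ (∀ x, 0 < ind x) ∧ ∀ x, BranchedAt F ind x

/-- The transfer operator of a branched function: `Φ(f)(y) = ∑_{x ∈ F⁻¹(y)} ind_F(x)·f(x)`. -/
noncomputable def transfer {X Y : Type*} (F : X → Y) (ind : X → ℕ) (f : X → ℂ) (y : Y) : ℂ :=
  ∑' x : F ⁻¹' {y}, (ind x.1 : ℂ) * f x.1

/-!
Near each point `x`, the inverse branches `g i` parametrise the fibres of `F` inside a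
neighbourhood `U` of `x`, each point `u ∈ U` being hit exactly `ind u` times. Hence fibres are
discrete, and a fibre `F⁻¹ y₀` meets the compact support of `f` in finitely many points `xₖ`.
After separating the `xₖ` by disjoint open sets, for `y` near `y₀` every point of
`F⁻¹ y ∩ supp f` lies in the chart at one of the `xₖ`, so `Φ f y = ∑ₖ ∑ᵢ f (gₖᵢ y)`, which is
continuous at `y₀` because the branches are.
-/

section

open Set
open scoped Finset

variable {X Y : Type*}

theorem support_transfer_subset (F : X → Y) (ind : X → ℕ) (f : X → ℂ) :
    Function.support (transfer F ind f) ⊆ F '' Function.support f := by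
  intro y hy
  by_contra hyF
  refine hy ((tsum_congr fun x => ?_).trans tsum_zero)
  have hfx : f x = 0 := by_contra fun hfx => hyF ⟨x, hfx, x.2⟩
  rw [hfx, mul_zero]

theorem transfer_eq_sum {F : X → Y} {ind : X → ℕ} {f : X → ℂ} {y : Y} {T : Finset X}
    (hT : ∀ u ∈ T, F u = y) (hsupp : ∀ u, F u = y → f u ≠ 0 → u ∈ T) :
    transfer F ind f y = ∑ u ∈ T, (ind u : ℂ) * f u := by
  rw [transfer, tsum_subtype (F ⁻¹' {y}) fun u => (ind u : ℂ) * f u,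
    tsum_eq_sum fun u huT => ?_]
  · exact Finset.sum_congr rfl fun u hu => indicator_of_mem (s := F ⁻¹' {y}) (hT u hu) _
  · by_cases hFu : F u = y
    · rw [indicator_of_mem (s := F ⁻¹' {y}) hFu, not_not.1 (mt (hsupp u hFu) huT), mul_zero]
    · exact indicator_of_notMem (s := F ⁻¹' {y}) hFu _

variable [TopologicalSpace X] [TopologicalSpace Y] {F : X → Y} {ind : X → ℕ}

structure InverseBranches (F : X → Y) (ind : X → ℕ) (x : X) where
  U : Set X
  V : Set Y
  g : Fin (ind x) → Y → X
  isOpen_U : IsOpen U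
  mem_U : x ∈ U
  isOpen_V : IsOpen V
  mem_V : F x ∈ V
  F_g : ∀ i, ∀ v ∈ V, F (g i v) = v
  g_F : ∀ i, g i (F x) = x
  continuousWithinAt_g : ∀ i, ContinuousWithinAt (g i) V (F x)
  U_eq : U = ⋃ i, g i '' V
  ind_eq : ∀ u ∈ U, ind u = Nat.card {i : Fin (ind x) // u ∈ g i '' V}

theorem BranchedAt.nonempty_inverseBranches {x : X} (h : BranchedAt F ind x) :
    Nonempty (InverseBranches F ind x) := by
  obtain ⟨U, V, g, hU, hxU, hV, hxV, -, hFg, hgF, hg, hUeq, hind⟩ := h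
  exact ⟨⟨U, V, g, hU, hxU, hV, hxV, hFg, hgF, hg, hUeq, hind⟩⟩

namespace InverseBranches

variable {x : X} (b : InverseBranches F ind x)

theorem mem_image_g_iff {y : Y} (hy : y ∈ b.V) {u : X} (i : Fin (ind x)) :
    u ∈ b.g i '' b.V ∧ F u = y ↔ b.g i y = u := by
  constructor
  · rintro ⟨⟨v, hv, rfl⟩, rfl⟩
    rw [b.F_g i v hv]
  · rintro rfl
    exact ⟨mem_image_of_mem _ hy, b.F_g i y hy⟩

theorem mem_U_and_eq_iff {y : Y} (hy : y ∈ b.V) {u : X} :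
    u ∈ b.U ∧ F u = y ↔ ∃ i, b.g i y = u := by
  simp only [b.U_eq, mem_iUnion, ← b.mem_image_g_iff hy]
  grind

theorem eq_of_mem_U {u : X} (hu : u ∈ b.U) (hFu : F u = F x) : u = x := by
  obtain ⟨i, rfl⟩ := (b.mem_U_and_eq_iff b.mem_V).1 ⟨hu, hFu⟩
  exact b.g_F i

theorem continuousAt_g (i : Fin (ind x)) : ContinuousAt (b.g i) (F x) :=
  (b.continuousWithinAt_g i).continuousAt (b.isOpen_V.mem_nhds b.mem_V)

theorem tendsto_g (i : Fin (ind x)) : Tendsto (b.g i) (𝓝 (F x)) (𝓝 x) := by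
  simpa only [b.g_F] using (b.continuousAt_g i).tendsto

theorem ind_g [DecidableEq X] {y : Y} (hy : y ∈ b.V) (i : Fin (ind x)) :
    ind (b.g i y) = #{j | b.g j y = b.g i y} := by
  have hU : b.g i y ∈ b.U := ((b.mem_U_and_eq_iff hy).2 ⟨i, rfl⟩).1
  rw [b.ind_eq _ hU, ← Fintype.card_subtype, ← Nat.card_eq_fintype_card]
  refine Nat.card_congr (Equiv.subtypeEquivRight fun j => ?_)
  rw [← b.mem_image_g_iff hy, and_iff_left (b.F_g i y hy)]

theorem sum_comp_g [DecidableEq X] {M : Type*} [AddCommMonoid M] (φ : X → M) {y : Y}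
    (hy : y ∈ b.V) :
    ∑ i, φ (b.g i y) = ∑ u ∈ Finset.univ.image (b.g · y), ind u • φ u := by
  rw [Finset.sum_comp]
  refine Finset.sum_congr rfl fun u hu => ?_
  obtain ⟨i, -, rfl⟩ := Finset.mem_image.1 hu
  rw [b.ind_g hy]

end InverseBranches

theorem IsBranched.isDiscrete_fiber (hF : IsBranched F ind) (y : Y) :
    IsDiscrete (F ⁻¹' {y}) := by
  refine isDiscrete_iff_forall_mem_exists_isOpen.2 fun x hx => ?_
  obtain ⟨b⟩ := (hF.2.2 x).nonempty_inverseBranches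
  refine ⟨b.U, b.isOpen_U, subset_antisymm ?_ ?_⟩
  · rintro u ⟨hu, hFu⟩
    exact b.eq_of_mem_U hu (hFu.trans hx.symm)
  · exact singleton_subset_iff.2 ⟨b.mem_U, hx⟩

theorem IsBranched.finite_fiber_inter [T1Space Y] (hF : IsBranched F ind) {K : Set X}
    (hK : IsCompact K) (y : Y) : (F ⁻¹' {y} ∩ K).Finite :=
  (hK.inter_left (isClosed_singleton.preimage hF.1)).finite
    ((hF.isDiscrete_fiber y).mono inter_subset_left)

theorem tsupport_transfer_subset [T2Space Y] (hF : Continuous F) {f : X → ℂ}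
    (hf : HasCompactSupport f) : tsupport (transfer F ind f) ⊆ F '' tsupport f :=
  closure_minimal ((support_transfer_subset F ind f).trans (image_mono (subset_tsupport f)))
    (hf.image hF).isClosed

theorem eventually_preimage_inter_subset [T2Space Y] (hF : Continuous F) {K W : Set X}
    (hK : IsCompact K) (hW : IsOpen W) {y₀ : Y} (h : F ⁻¹' {y₀} ∩ K ⊆ W) :
    ∀ᶠ y in 𝓝 y₀, F ⁻¹' {y} ∩ K ⊆ W := by
  have hy₀ : y₀ ∉ F '' (K \ W) := fun ⟨u, ⟨huK, huW⟩, hFu⟩ => huW (h ⟨hFu, huK⟩)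
  filter_upwards [((hK.diff hW).image hF).isClosed.isOpen_compl.mem_nhds hy₀]
    with y hy u ⟨hFu, huK⟩
  by_contra huW
  exact hy ⟨u, ⟨huK, huW⟩, hFu⟩

theorem transfer_eq_sum_sum_g [DecidableEq X] (b : ∀ x, InverseBranches F ind x) {f : X → ℂ}
    {s : Finset X} {y : Y} (hV : ∀ x ∈ s, y ∈ (b x).V)
    (hdisj : (s : Set X).PairwiseDisjoint fun x => Finset.univ.image ((b x).g · y))
    (hcover : ∀ u, F u = y → f u ≠ 0 → ∃ x ∈ s, u ∈ (b x).U) :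
    transfer F ind f y = ∑ x ∈ s, ∑ i, f ((b x).g i y) := by
  simp only [Finset.sum_congr rfl fun x hx => (b x).sum_comp_g f (hV x hx), nsmul_eq_mul,
    ← Finset.sum_biUnion hdisj]
  refine transfer_eq_sum (fun u hu => ?_) fun u hFu hfu => ?_
  · obtain ⟨x, hx, hu⟩ := Finset.mem_biUnion.1 hu
    obtain ⟨i, -, rfl⟩ := Finset.mem_image.1 hu
    exact (b x).F_g i y (hV x hx)
  · obtain ⟨x, hx, hux⟩ := hcover u hFu hfu
    obtain ⟨i, rfl⟩ := ((b x).mem_U_and_eq_iff (hV x hx)).1 ⟨hux, hFu⟩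
    exact Finset.mem_biUnion.2 ⟨x, hx, Finset.mem_image_of_mem _ (Finset.mem_univ i)⟩

theorem IsBranched.continuousAt_transfer [T2Space X] [T2Space Y] (hF : IsBranched F ind)
    {f : X → ℂ} (hf : Continuous f) (hfK : HasCompactSupport f) (y₀ : Y) :
    ContinuousAt (transfer F ind f) y₀ := by
  classical
  obtain ⟨b⟩ : Nonempty (∀ x, InverseBranches F ind x) :=
    ⟨fun x => (hF.2.2 x).nonempty_inverseBranches.some⟩
  set s := (hF.finite_fiber_inter hfK y₀).toFinset
  have hs : ∀ x ∈ s, F x = y₀ := fun x hx => by simp_all [s]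
  obtain ⟨O, hO, hOdisj⟩ := s.finite_toSet.t2_separation
  have hcover : ∀ᶠ y in 𝓝 y₀, F ⁻¹' {y} ∩ tsupport f ⊆ ⋃ x ∈ s, (b x).U := by
    refine eventually_preimage_inter_subset hF.1 hfK (isOpen_biUnion fun x _ => (b x).isOpen_U) ?_
    rintro u ⟨hFu, huK⟩
    exact mem_biUnion (by simpa [s] using ⟨hFu, huK⟩) (b u).mem_U
  have hV : ∀ᶠ y in 𝓝 y₀, ∀ x ∈ s, y ∈ (b x).V := by
    refine s.eventually_all.2 fun x hx => ?_
    rw [← hs x hx]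
    exact (b x).isOpen_V.mem_nhds (b x).mem_V
  have hgO : ∀ᶠ y in 𝓝 y₀, ∀ x ∈ s, ∀ i, (b x).g i y ∈ O x := by
    refine s.eventually_all.2 fun x hx => eventually_all.2 fun i => ?_
    rw [← hs x hx]
    exact (b x).tendsto_g i ((hO x).2.mem_nhds (hO x).1)
  have heq : transfer F ind f =ᶠ[𝓝 y₀] fun y => ∑ x ∈ s, ∑ i, f ((b x).g i y) := by
    filter_upwards [hcover, hV, hgO] with y hyC hyV hyO
    refine transfer_eq_sum_sum_g b hyV (fun x hx x' hx' hne => ?_) fun u hFu hfu => ?_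
    · simp only [Function.onFun, Finset.disjoint_left, Finset.mem_image, Finset.mem_univ,
        true_and]
      rintro _ ⟨i, rfl⟩ ⟨j, hj⟩
      exact Set.disjoint_left.1 (hOdisj hx hx' hne) (hyO x hx i) (hj ▸ hyO x' hx' j)
    · simpa using hyC ⟨hFu, subset_tsupport f hfu⟩
  refine ContinuousAt.congr ?_ heq.symm
  refine tendsto_finsetSum s fun x hx => tendsto_finsetSum _ fun i _ => ?_
  rw [← hs x hx]
  exact hf.continuousAt.comp ((b x).continuousAt_g i)

end

theorem transfer_of_compactSupport_general {X Y : Type*}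
    [TopologicalSpace X] [T2Space X]
    [TopologicalSpace Y] [T2Space Y]
    (F : X → Y) (ind : X → ℕ) (hF : IsBranched F ind)
    (f : X → ℂ) (hf : Continuous f) (hsupp : HasCompactSupport f) :
    (∀ y : Y, (F ⁻¹' {y} ∩ tsupport f).Finite) ∧
    Continuous (transfer F ind f) ∧
    tsupport (transfer F ind f) ⊆ F '' tsupport f ∧
    HasCompactSupport (transfer F ind f) := by
  have hsub : tsupport (transfer F ind f) ⊆ F '' tsupport f :=
    tsupport_transfer_subset hF.1 hsupp
  exact ⟨hF.finite_fiber_inter hsupp,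
    continuous_iff_continuousAt.2 (hF.continuousAt_transfer hf hsupp), hsub,
    (hsupp.image hF.1).of_isClosed_subset (isClosed_tsupport _) hsub⟩

/-- **Proposition 5.3 of the paper.** If `F : X → Y` is a branched function and
`f ∈ C_c(X)`, then each fiber meets the support of `f` in a finite set (so `Φ(f)(y)` is a
finite sum), `Φ(f)` is continuous, its support is contained in the compact set
`F(supp f)`, and hence `Φ(f) ∈ C_c(Y)`. -/
theorem transfer_of_compactSupport {X Y : Type*}
    [TopologicalSpace X] [T2Space X] [LocallyCompactSpace X]
    [TopologicalSpace Y] [T2Space Y] [LocallyCompactSpace Y]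
    (F : X → Y) (ind : X → ℕ) (hF : IsBranched F ind)
    (f : X → ℂ) (hf : Continuous f) (hsupp : HasCompactSupport f) :
    (∀ y : Y, (F ⁻¹' {y} ∩ tsupport f).Finite) ∧
    Continuous (transfer F ind f) ∧
    tsupport (transfer F ind f) ⊆ F '' tsupport f ∧
    HasCompactSupport (transfer F ind f) :=
  transfer_of_compactSupport_general F ind hF f hf hsupp
end

section
/- Let F : X → Y be a branched function with transfer operator Φ. If φ, ψ ∈ C₀(X) are real-valued with 0 ≤ φ ≤ ψ pointwise, and ψ ∈ C₁(X) (i.e. Φ(ψ) is finite everywhere and lies in C₀(Y)), then φ ∈ C₁(X): the function Φ(φ) is finite everywhere, continuous, vanishes at infinity, and satisfies 0 ≤ Φ(φ) ≤ Φ(ψ). -/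
/-!
For a nonnegative continuous `f` with summable fibres, `Φ f` is lower semicontinuous: near `y`,
each preimage `x` of `y` splits into `ind x` branch points whose weighted values tend to
`ind x * f x`, and disjoint neighbourhoods of finitely many preimages keep these points distinct,
so every finite partial sum of `Φ f y` is eventually exceeded by `Φ f`. Applied to `φ` and to
`ψ - φ`, this makes `Φ φ = Φ ψ - Φ (ψ - φ)` both lower and upper semicontinuous, hence continuous,
and `0 ≤ Φ φ ≤ Φ ψ` squeezes it to `0` at infinity.
-/

open Filter Topology

/-- The transfer operator of a branched function, for real-valued functions:
`Φ(f)(y) = ∑_{x ∈ F⁻¹(y)} ind_F(x)·f(x)`. -/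
noncomputable def transferR {X Y : Type*} (F : X → Y) (ind : X → ℕ) (f : X → ℝ) (y : Y) : ℝ :=
  ∑' x : F ⁻¹' {y}, (ind x.1 : ℝ) * f x.1

section

open Finset

variable {X Y : Type*} {F : X → Y} {ind : X → ℕ}

theorem sum_comp_branches_eq [DecidableEq X] {n : ℕ} {g : Fin n → Y → X} {V : Set Y}
    (hFg : ∀ i, ∀ v ∈ V, F (g i v) = v)
    (hind : ∀ u ∈ ⋃ i, g i '' V, ind u = Nat.card {i // u ∈ g i '' V})
    (f : X → ℝ) {v : Y} (hv : v ∈ V) :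
    ∑ i, f (g i v) = ∑ u ∈ univ.image (g · v), (ind u : ℝ) * f u := by
  rw [sum_comp]
  refine sum_congr rfl fun u hu => ?_
  obtain ⟨j, -, rfl⟩ := mem_image.1 hu
  have hmem : ∀ i, g j v ∈ g i '' V ↔ g i v = g j v := fun i =>
    ⟨fun ⟨w, hw, hwj⟩ => by
      obtain rfl : w = v := by rw [← hFg i w hw, hwj, hFg j v hv]
      exact hwj, fun h => ⟨v, hv, h⟩⟩
  rw [hind _ (Set.mem_iUnion.2 ⟨j, v, hv, rfl⟩), Nat.card_congr (Equiv.subtypeEquivRight hmem),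
    Nat.card_eq_fintype_card, Fintype.card_subtype, nsmul_eq_mul]

theorem sum_le_transferR {f : X → ℝ} (hf0 : ∀ x, 0 ≤ f x) {v : Y}
    (hsum : Summable fun x : F ⁻¹' {v} => (ind x.1 : ℝ) * f x.1)
    {T : Finset X} (hT : ↑T ⊆ F ⁻¹' {v}) :
    ∑ u ∈ T, (ind u : ℝ) * f u ≤ transferR F ind f v := by
  classical
  rw [← sum_subtype_of_mem _ hT]
  exact hsum.sum_le_tsum _ fun x _ => mul_nonneg (Nat.cast_nonneg _) (hf0 x)

theorem summable_fiber_of_le {φ ψ : X → ℝ} (hφ0 : ∀ x, 0 ≤ φ x) (hle : ∀ x, φ x ≤ ψ x) {y : Y}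
    (hψsum : Summable fun x : F ⁻¹' {y} => (ind x.1 : ℝ) * ψ x.1) :
    Summable fun x : F ⁻¹' {y} => (ind x.1 : ℝ) * φ x.1 :=
  hψsum.of_nonneg_of_le (fun x => mul_nonneg (Nat.cast_nonneg _) (hφ0 x))
    fun x => mul_le_mul_of_nonneg_left (hle x) (Nat.cast_nonneg _)

theorem transferR_sub {φ ψ : X → ℝ} {y : Y}
    (hφsum : Summable fun x : F ⁻¹' {y} => (ind x.1 : ℝ) * φ x.1)
    (hψsum : Summable fun x : F ⁻¹' {y} => (ind x.1 : ℝ) * ψ x.1) :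
    transferR F ind (ψ - φ) y = transferR F ind ψ y - transferR F ind φ y := by
  simp only [transferR, Pi.sub_apply, mul_sub, hψsum.tsum_sub hφsum]

variable [TopologicalSpace X] [TopologicalSpace Y]

theorem BranchedAt.exists_finset_tendsto {x : X} (h : BranchedAt F ind x) {f : X → ℝ}
    (hf : ContinuousAt f x) {W : Set X} (hW : W ∈ 𝓝 x) :
    ∃ T : Y → Finset X, (∀ᶠ v in 𝓝 (F x), ↑(T v) ⊆ W ∩ F ⁻¹' {v}) ∧
      Tendsto (fun v => ∑ u ∈ T v, (ind u : ℝ) * f u) (𝓝 (F x)) (𝓝 (ind x * f x)) := by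
  classical
  obtain ⟨U, V, g, -, -, hVo, hxV, -, hFg, hgx, hgc, rfl, hind⟩ := h
  have hg : ∀ i, Tendsto (g i) (𝓝 (F x)) (𝓝 x) := fun i => by
    simpa [ContinuousAt, hgx i] using (hgc i).continuousAt (hVo.mem_nhds hxV)
  refine ⟨fun v => univ.image (g · v), ?_, ?_⟩
  · filter_upwards [hVo.mem_nhds hxV, eventually_all.2 fun i => hg i hW] with v hv hgW
    simp [Set.subset_def, hgW, hFg _ _ hv]
  · have hsum : Tendsto (fun v => ∑ i, f (g i v)) (𝓝 (F x)) (𝓝 (ind x * f x)) := by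
      simpa [hgx] using tendsto_finsetSum univ fun i _ => hf.tendsto.comp (hg i)
    refine hsum.congr' ?_
    filter_upwards [hVo.mem_nhds hxV] with v hv
    exact sum_comp_branches_eq hFg hind f hv

theorem transferR_lowerSemicontinuous [T2Space X] (hF : ∀ x, BranchedAt F ind x)
    {f : X → ℝ} (hfc : Continuous f) (hf0 : ∀ x, 0 ≤ f x)
    (hsum : ∀ y : Y, Summable fun x : F ⁻¹' {y} => (ind x.1 : ℝ) * f x.1) :
    LowerSemicontinuous (transferR F ind f) := by
  classical
  intro y a ha
  obtain ⟨S, hSy, hS⟩ : ∃ S : Finset X, ↑S ⊆ F ⁻¹' {y} ∧ a < ∑ x ∈ S, (ind x : ℝ) * f x := by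
    obtain ⟨S, hS⟩ := ((hsum y).hasSum.eventually_const_lt ha).exists
    exact ⟨S.map (.subtype _), by simp, by simpa using hS⟩
  obtain ⟨W, hW, hWd⟩ := S.finite_toSet.t2_separation
  choose! T hTW hT using fun x => (hF x).exists_finset_tendsto hfc.continuousAt
    ((hW x).2.mem_nhds (hW x).1)
  have hFS : ∀ x ∈ S, F x = y := fun x hx => hSy hx
  have hlim : Tendsto (fun v => ∑ x ∈ S, ∑ u ∈ T x v, (ind u : ℝ) * f u) (𝓝 y)
      (𝓝 (∑ x ∈ S, (ind x : ℝ) * f x)) :=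
    tendsto_finsetSum S fun x hx => hFS x hx ▸ hT x
  have hloc : ∀ᶠ v in 𝓝 y, ∀ x ∈ S, ↑(T x v) ⊆ W x ∩ F ⁻¹' {v} :=
    (eventually_all_finset S).2 fun x hx => hFS x hx ▸ hTW x
  filter_upwards [hlim.eventually_const_lt hS, hloc] with v hav hv
  have hdisj : (S : Set X).PairwiseDisjoint (T · v) := fun x hx x' hx' hne =>
    disjoint_coe.1 <| (hWd hx hx' hne).mono ((hv x hx).trans Set.inter_subset_left)
      ((hv x' hx').trans Set.inter_subset_left)
  calc a < ∑ x ∈ S, ∑ u ∈ T x v, (ind u : ℝ) * f u := hav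
    _ = ∑ u ∈ S.biUnion (T · v), (ind u : ℝ) * f u := (sum_biUnion hdisj).symm
    _ ≤ transferR F ind f v := sum_le_transferR hf0 (hsum v) <| by
      simpa using fun x hx => (hv x hx).trans Set.inter_subset_right

theorem transferR_continuous_of_le [T2Space X]
    (hF : ∀ x, BranchedAt F ind x) {φ ψ : X → ℝ} (hφc : Continuous φ) (hψc : Continuous ψ)
    (hφ0 : ∀ x, 0 ≤ φ x) (hle : ∀ x, φ x ≤ ψ x)
    (hψsum : ∀ y : Y, Summable fun x : F ⁻¹' {y} => (ind x.1 : ℝ) * ψ x.1)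
    (hψcont : Continuous (transferR F ind ψ)) :
    Continuous (transferR F ind φ) := by
  have hφsum y := summable_fiber_of_le hφ0 hle (hψsum y)
  have hgap : LowerSemicontinuous (transferR F ind (ψ - φ)) :=
    transferR_lowerSemicontinuous hF (hψc.sub hφc) (fun x => sub_nonneg.2 (hle x))
      fun y => by simpa [mul_sub] using (hψsum y).sub (hφsum y)
  have hupper : UpperSemicontinuous (transferR F ind φ) := by
    have hdiff : transferR F ind φ = transferR F ind ψ + Neg.neg ∘ transferR F ind (ψ - φ) := by
      ext y
      simp [transferR_sub (hφsum y) (hψsum y)]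
    rw [hdiff]
    exact hψcont.upperSemicontinuous.add
      (continuous_neg.comp_lowerSemicontinuous_antitone hgap fun _ _ => neg_le_neg)
  exact continuous_iff_lower_upperSemicontinuous.2
    ⟨transferR_lowerSemicontinuous hF hφc hφ0 hφsum, hupper⟩

end

theorem transfer_hereditary_general {X Y : Type*}
    [TopologicalSpace X] [T2Space X]
    [TopologicalSpace Y]
    (F : X → Y) (ind : X → ℕ) (hF : IsBranched F ind)
    (φ ψ : X → ℝ)
    (hφc : Continuous φ)
    (hψc : Continuous ψ)
    (hle : ∀ x : X, 0 ≤ φ x ∧ φ x ≤ ψ x)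
    (hψsum : ∀ y : Y, Summable fun x : F ⁻¹' {y} => (ind x.1 : ℝ) * ψ x.1)
    (hψcont : Continuous (transferR F ind ψ))
    (hψinf : Tendsto (transferR F ind ψ) (cocompact Y) (nhds 0)) :
    (∀ y : Y, Summable fun x : F ⁻¹' {y} => (ind x.1 : ℝ) * φ x.1) ∧
    Continuous (transferR F ind φ) ∧
    Tendsto (transferR F ind φ) (cocompact Y) (nhds 0) ∧
    ∀ y : Y, 0 ≤ transferR F ind φ y ∧ transferR F ind φ y ≤ transferR F ind ψ y := by
  have hφ0 x := (hle x).1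
  have hφψ x := (hle x).2
  have hφsum y := summable_fiber_of_le hφ0 hφψ (hψsum y)
  have hbounds : ∀ y, 0 ≤ transferR F ind φ y ∧ transferR F ind φ y ≤ transferR F ind ψ y :=
    fun y => ⟨tsum_nonneg fun x => mul_nonneg (Nat.cast_nonneg _) (hφ0 x),
      (hφsum y).tsum_le_tsum (fun x => mul_le_mul_of_nonneg_left (hφψ x) (Nat.cast_nonneg _))
        (hψsum y)⟩
  refine ⟨hφsum, transferR_continuous_of_le hF.2.2 hφc hψc hφ0 hφψ hψsum hψcont, ?_, hbounds⟩
  exact tendsto_of_tendsto_of_tendsto_of_le_of_le tendsto_const_nhds hψinf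
    (fun y => (hbounds y).1) fun y => (hbounds y).2

/-- **Hereditary property of `C₁(X)` (Lemma 5.4 of the paper).** If `0 ≤ φ ≤ ψ`
pointwise, `φ, ψ ∈ C₀(X)` and `ψ ∈ C₁(X)` (the fiber sums of `ind·ψ` all converge and
`Φ(ψ)` belongs to `C₀(Y)`), then `φ ∈ C₁(X)`: its fiber sums converge, `Φ(φ)` is
continuous and vanishes at infinity, and `0 ≤ Φ(φ) ≤ Φ(ψ)`. -/
theorem transfer_hereditary {X Y : Type*}
    [TopologicalSpace X] [T2Space X] [LocallyCompactSpace X]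
    [TopologicalSpace Y] [T2Space Y] [LocallyCompactSpace Y]
    (F : X → Y) (ind : X → ℕ) (hF : IsBranched F ind)
    (φ ψ : X → ℝ)
    (hφc : Continuous φ) (hφ0 : Tendsto φ (cocompact X) (nhds 0))
    (hψc : Continuous ψ) (hψ0 : Tendsto ψ (cocompact X) (nhds 0))
    (hle : ∀ x : X, 0 ≤ φ x ∧ φ x ≤ ψ x)
    (hψsum : ∀ y : Y, Summable fun x : F ⁻¹' {y} => (ind x.1 : ℝ) * ψ x.1)
    (hψcont : Continuous (transferR F ind ψ))
    (hψinf : Tendsto (transferR F ind ψ) (cocompact Y) (nhds 0)) :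
    (∀ y : Y, Summable fun x : F ⁻¹' {y} => (ind x.1 : ℝ) * φ x.1) ∧
    Continuous (transferR F ind φ) ∧
    Tendsto (transferR F ind φ) (cocompact Y) (nhds 0) ∧
    ∀ y : Y, 0 ≤ transferR F ind φ y ∧ transferR F ind φ y ≤ transferR F ind ψ y :=
  transfer_hereditary_general F ind hF φ ψ hφc hψc hle hψsum hψcont hψinf
end

section
/- Let F : X → Y and G : Y → Z be branched functions with index functions ind_F and ind_G respectively, where X, Y, Z are locally compact Hausdorff spaces. Then the composition G ∘ F : X → Z is a branched function with index function ind_{G∘F}(x) = ind_G(F(x)) · ind_F(x). -/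
open Filter Topology

/-!
Take an inverse-branch chart `(U, V, gᵢ)` of `F` at `x` and one `(U', V', hⱼ)` of `G` at `F x`.
Since the finitely many `hⱼ` are continuous at `G (F x)` and send it to `F x ∈ V`, we may shrink
`V'` until every `hⱼ` maps it into `V`. Then the composites `gᵢ ∘ hⱼ` form a chart of `G ∘ F` at
`x` with domain `U ∩ F ⁻¹' U'`: a point `u` lies in the image of `gᵢ ∘ hⱼ` exactly when `u` lies
in the image of `gᵢ` and `F u` in that of `hⱼ`, so the branches through `u` are counted by
pairs and the index multiplies.
-/

open Set

structure BranchChart {X Y : Type*} [TopologicalSpace X] [TopologicalSpace Y]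
    (F : X → Y) (ind : X → ℕ) (x : X) where
  U : Set X
  V : Set Y
  g : Fin (ind x) → Y → X
  isOpen_U : IsOpen U
  mem_U : x ∈ U
  isOpen_V : IsOpen V
  mem_V : F x ∈ V
  mapsTo : ∀ i, MapsTo (g i) V U
  rightInvOn : ∀ i, RightInvOn (g i) F V
  apply_center : ∀ i, g i (F x) = x
  continuousWithinAt : ∀ i, ContinuousWithinAt (g i) V (F x)
  U_eq : U = ⋃ i, g i '' V
  ind_eq : ∀ u ∈ U, ind u = Nat.card {i : Fin (ind x) // u ∈ g i '' V}

theorem Set.RightInvOn.image_eq_preimage_inter {α β : Type*} {f : α → β} {g : β → α}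
    {s t : Set β} (hg : RightInvOn g f t) (hs : s ⊆ t) : g '' s = f ⁻¹' s ∩ g '' t := by
  rw [← hg.image_inter', inter_eq_left.mpr hs]

namespace BranchChart

variable {X Y Z : Type*} [TopologicalSpace X] [TopologicalSpace Y] [TopologicalSpace Z]
  {F : X → Y} {ind : X → ℕ} {x : X}

theorem _root_.branchedAt_iff_nonempty_branchChart :
    BranchedAt F ind x ↔ Nonempty (BranchChart F ind x) :=
  ⟨fun ⟨U, V, g, hU, hxU, hV, hxV, hmaps, hinv, hcenter, hcont, hUeq, hind⟩ =>
      ⟨⟨U, V, g, hU, hxU, hV, hxV, hmaps, hinv, hcenter, hcont, hUeq, hind⟩⟩,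
    fun ⟨c⟩ => ⟨c.U, c.V, c.g, c.isOpen_U, c.mem_U, c.isOpen_V, c.mem_V, c.mapsTo,
      c.rightInvOn, c.apply_center, c.continuousWithinAt, c.U_eq, c.ind_eq⟩⟩

def restrict (c : BranchChart F ind x) (hF : Continuous F) {W : Set Y} (hW : IsOpen W)
    (hxW : F x ∈ W) (hWV : W ⊆ c.V) : BranchChart F ind x where
  U := c.U ∩ F ⁻¹' W
  V := W
  g := c.g
  isOpen_U := c.isOpen_U.inter (hW.preimage hF)
  mem_U := ⟨c.mem_U, hxW⟩
  isOpen_V := hW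
  mem_V := hxW
  mapsTo i w hw := ⟨c.mapsTo i (hWV hw), by rwa [mem_preimage, c.rightInvOn i (hWV hw)]⟩
  rightInvOn i := (c.rightInvOn i).mono hWV
  apply_center := c.apply_center
  continuousWithinAt i := (c.continuousWithinAt i).mono hWV
  U_eq := by
    simp_rw [fun i => (c.rightInvOn i).image_eq_preimage_inter hWV, ← inter_iUnion, ← c.U_eq,
      inter_comm]
  ind_eq u hu := by
    rw [c.ind_eq u hu.1]
    simp_rw [fun i => (c.rightInvOn i).image_eq_preimage_inter hWV, mem_inter_iff, hu.2,
      true_and]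

theorem exists_mapsTo_of_mem_nhds (c : BranchChart F ind x) (hF : Continuous F) {O : Set X}
    (hO : O ∈ 𝓝 x) : ∃ c' : BranchChart F ind x, ∀ i, MapsTo (c'.g i) c'.V O := by
  have hpre : ∀ i, c.g i ⁻¹' O ∈ 𝓝 (F x) := fun i => by
    rw [← c.isOpen_V.nhdsWithin_eq c.mem_V]
    exact (c.continuousWithinAt i).preimage_mem_nhdsWithin (by rwa [c.apply_center])
  obtain ⟨W, hWsub, hW, hxW⟩ :=
    mem_nhds_iff.mp (inter_mem (c.isOpen_V.mem_nhds c.mem_V) (iInter_mem.mpr hpre))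
  exact ⟨c.restrict hF hW hxW fun w hw => (hWsub hw).1,
    fun i w hw => mem_iInter.mp (hWsub hw).2 i⟩

theorem mem_image_comp_iff {G : Y → Z} {indG : Y → ℕ} {cG : BranchChart G indG (F x)}
    {cF : BranchChart F ind x} {i : Fin (ind x)} {j : Fin (indG (F x))}
    (hmaps : MapsTo (cG.g j) cG.V cF.V) {u : X} :
    u ∈ cF.g i ∘ cG.g j '' cG.V ↔ F u ∈ cG.g j '' cG.V ∧ u ∈ cF.g i '' cF.V := by
  rw [image_comp, (cF.rightInvOn i).image_eq_preimage_inter hmaps.image_subset]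
  rfl

def comp {G : Y → Z} {indG : Y → ℕ} (cG : BranchChart G indG (F x)) (cF : BranchChart F ind x)
    (hF : Continuous F) (hmaps : ∀ j, MapsTo (cG.g j) cG.V cF.V) :
    BranchChart (G ∘ F) (fun x => indG (F x) * ind x) x where
  U := cF.U ∩ F ⁻¹' cG.U
  V := cG.V
  g p := cF.g (finProdFinEquiv.symm p).2 ∘ cG.g (finProdFinEquiv.symm p).1
  isOpen_U := cF.isOpen_U.inter (cG.isOpen_U.preimage hF)
  mem_U := ⟨cF.mem_U, cG.mem_U⟩
  isOpen_V := cG.isOpen_V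
  mem_V := cG.mem_V
  mapsTo p := ((cF.mapsTo _).comp (hmaps _)).inter fun w hw => by
    rw [mem_preimage, Function.comp_apply, cF.rightInvOn _ (hmaps _ hw)]
    exact cG.mapsTo _ hw
  rightInvOn p := (cF.rightInvOn _).comp (cG.rightInvOn _) (hmaps _)
  apply_center p := by simp only [Function.comp_apply, cG.apply_center, cF.apply_center]
  continuousWithinAt p :=
    (cF.continuousWithinAt _).comp_of_eq (cG.continuousWithinAt _) (hmaps _)
      (cG.apply_center _)
  U_eq := by
    ext u
    rw [mem_iUnion, finProdFinEquiv.surjective.exists, cF.U_eq, cG.U_eq]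
    simp only [Equiv.symm_apply_apply, mem_inter_iff, mem_preimage, mem_iUnion, Prod.exists,
      mem_image_comp_iff (hmaps _)]
    tauto
  ind_eq u hu := by
    rw [cG.ind_eq (F u) hu.2, cF.ind_eq u hu.1, ← Nat.card_prod]
    refine Nat.card_congr (Equiv.subtypeProdEquivProd.symm.trans
      (finProdFinEquiv.subtypeEquiv fun q => ?_))
    simp only [Equiv.symm_apply_apply, mem_image_comp_iff (hmaps _)]

end BranchChart

theorem isBranched_comp_general {X Y Z : Type*}
    [TopologicalSpace X] [TopologicalSpace Y] [TopologicalSpace Z]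
    (F : X → Y) (G : Y → Z) (indF : X → ℕ) (indG : Y → ℕ)
    (hF : IsBranched F indF) (hG : IsBranched G indG) :
    IsBranched (G ∘ F) (fun x => indG (F x) * indF x) := by
  obtain ⟨hFc, hFpos, hFbr⟩ := hF
  obtain ⟨hGc, hGpos, hGbr⟩ := hG
  refine ⟨hGc.comp hFc, fun x => Nat.mul_pos (hGpos _) (hFpos _), fun x => ?_⟩
  obtain ⟨cF⟩ := branchedAt_iff_nonempty_branchChart.mp (hFbr x)
  obtain ⟨cG₀⟩ := branchedAt_iff_nonempty_branchChart.mp (hGbr (F x))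
  obtain ⟨cG, hcG⟩ := cG₀.exists_mapsTo_of_mem_nhds hGc (cF.isOpen_V.mem_nhds cF.mem_V)
  exact branchedAt_iff_nonempty_branchChart.mpr ⟨cG.comp cF hFc hcG⟩

/-- **Composition of branched functions.** If `F : X → Y` and `G : Y → Z` are branched
functions with index functions `ind_F`, `ind_G`, then `G ∘ F` is a branched function
with index function `x ↦ ind_G(F(x)) · ind_F(x)`. -/
theorem isBranched_comp {X Y Z : Type*}
    [TopologicalSpace X] [T2Space X] [LocallyCompactSpace X]
    [TopologicalSpace Y] [T2Space Y] [LocallyCompactSpace Y]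
    [TopologicalSpace Z] [T2Space Z] [LocallyCompactSpace Z]
    (F : X → Y) (G : Y → Z) (indF : X → ℕ) (indG : Y → ℕ)
    (hF : IsBranched F indF) (hG : IsBranched G indG) :
    IsBranched (G ∘ F) (fun x => indG (F x) * indF x) :=
  isBranched_comp_general F G indF indG hF hG
end

section
/- Let F : U → V be a branched function with index function ind_F, and let Y ⊆ V be a closed subset. Set X := F⁻¹(Y), a closed subset of U. Then the restriction F|_X : X → Y (with the subspace topologies, under which X and Y are again locally compact Hausdorff) is a branched function with index function ind_F|_X. -/
/-! Since `F ∘ gᵢ = id` on `V'`, each inverse branch `gᵢ` of `F` maps `V' ∩ Y` into `F⁻¹(Y)`.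
These restricted branches are inverse branches of `F|_X`, and a point of `X` lies in the image
of the `i`-th restricted branch exactly when it lies in the image of `gᵢ`, so both the covering
of `U'` and the index count restrict to `X`. -/

open Filter Topology

open Set

section RestrictPreimageBranch

variable {X Y : Type*} {F : X → Y} {t : Set Y} {g : Y → X}

open Classical in
/-- The map `t → F ⁻¹' t` induced by a local right inverse `g` of `F`; it takes the junk value
`x₀` wherever `F (g v) ≠ v`. -/
noncomputable def restrictPreimageBranch (F : X → Y) (t : Set Y) (g : Y → X) (x₀ : F ⁻¹' t) :
    t → F ⁻¹' t :=
  fun v => if h : F (g v) = v then ⟨g v, show F (g v) ∈ t by rw [h]; exact v.2⟩ else x₀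

lemma coe_restrictPreimageBranch (x₀ : F ⁻¹' t) {v : t} (hv : F (g v) = v) :
    (restrictPreimageBranch F t g x₀ v : X) = g v := by
  simp [restrictPreimageBranch, hv]

lemma restrictPreimage_restrictPreimageBranch (x₀ : F ⁻¹' t) {v : t} (hv : F (g v) = v) :
    t.restrictPreimage F (restrictPreimageBranch F t g x₀ v) = v :=
  Subtype.ext <| (congrArg F (coe_restrictPreimageBranch x₀ hv)).trans hv

lemma mem_image_restrictPreimageBranch {S : Set Y} (hg : ∀ v ∈ S, F (g v) = v)
    (x₀ : F ⁻¹' t) (u : F ⁻¹' t) :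
    u ∈ restrictPreimageBranch F t g x₀ '' (Subtype.val ⁻¹' S) ↔ (u : X) ∈ g '' S := by
  constructor
  · rintro ⟨v, hv, rfl⟩
    exact ⟨v, hv, (coe_restrictPreimageBranch x₀ (hg v hv)).symm⟩
  · rintro ⟨v, hv, hgv⟩
    have hvt : v ∈ t := by rw [← hg v hv, hgv]; exact u.2
    refine ⟨⟨v, hvt⟩, hv, Subtype.ext ?_⟩
    exact (coe_restrictPreimageBranch x₀ (hg v hv)).trans hgv

lemma continuousWithinAt_restrictPreimageBranch [TopologicalSpace X] [TopologicalSpace Y]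
    {S : Set Y} (hg : ∀ v ∈ S, F (g v) = v) (x₀ : F ⁻¹' t) {v : t} (hv : (v : Y) ∈ S)
    (hc : ContinuousWithinAt g S v) :
    ContinuousWithinAt (restrictPreimageBranch F t g x₀) (Subtype.val ⁻¹' S) v := by
  rw [IsInducing.subtypeVal.continuousWithinAt_iff]
  exact (hc.comp continuous_subtype_val.continuousWithinAt (mapsTo_preimage _ _)).congr
    (fun w hw => coe_restrictPreimageBranch x₀ (hg w hw)) (coe_restrictPreimageBranch x₀ (hg v hv))

end RestrictPreimageBranch

section

variable {X Y : Type*} [TopologicalSpace X] [TopologicalSpace Y] {F : X → Y} {ind : X → ℕ}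
  {t : Set Y}

theorem BranchedAt.restrictPreimage {x : F ⁻¹' t} (h : BranchedAt F ind x) :
    BranchedAt (t.restrictPreimage F) (ind ∘ Subtype.val) x := by
  obtain ⟨U', V', g, hUo, hxU, hVo, hFxV, hgU, hFg, hgFx, hgc, hUeq, hind⟩ := h
  have hmem (i : Fin (ind x)) (u : F ⁻¹' t) :
      u ∈ restrictPreimageBranch F t (g i) x '' (Subtype.val ⁻¹' V') ↔ (u : X) ∈ g i '' V' :=
    mem_image_restrictPreimageBranch (hFg i) x u
  refine ⟨Subtype.val ⁻¹' U', Subtype.val ⁻¹' V', fun i => restrictPreimageBranch F t (g i) x,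
    hUo.preimage continuous_subtype_val, hxU, hVo.preimage continuous_subtype_val, hFxV,
    fun i v hv => ?_, fun i v hv => restrictPreimage_restrictPreimageBranch x (hFg i v hv),
    fun i => Subtype.ext ?_,
    fun i => continuousWithinAt_restrictPreimageBranch (hFg i) x hFxV (hgc i), ?_, ?_⟩
  · rw [mem_preimage, coe_restrictPreimageBranch x (hFg i v hv)]
    exact hgU i v hv
  · rw [coe_restrictPreimageBranch x (hFg i _ hFxV)]
    exact hgFx i
  · ext u
    simp only [mem_preimage, mem_iUnion, hmem, hUeq]
    exact Iff.rfl
  · intro u hu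
    exact (hind u hu).trans (Nat.card_congr (Equiv.subtypeEquivRight fun i => (hmem i u).symm))

theorem IsBranched.restrictPreimage (hF : IsBranched F ind) (t : Set Y) :
    IsBranched (t.restrictPreimage F) (ind ∘ Subtype.val) :=
  ⟨hF.1.restrictPreimage, fun x => hF.2.1 x, fun x => (hF.2.2 x).restrictPreimage⟩

end

theorem isBranched_restrict_closed_general {U V : Type*}
    [TopologicalSpace U]
    [TopologicalSpace V]
    (F : U → V) (ind : U → ℕ) (hF : IsBranched F ind)
    (Y : Set V) :
    IsBranched (fun x : F ⁻¹' Y => (⟨F x.1, x.2⟩ : Y)) (fun x : F ⁻¹' Y => ind x.1) :=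
  hF.restrictPreimage Y

/-- **Restriction of a branched function to the preimage of a closed set.** If
`F : U → V` is branched with index function `ind_F` and `Y ⊆ V` is closed, then with
`X := F⁻¹(Y)` the restriction `F|_X : X → Y` (with the subspace topologies) is a
branched function with index function `ind_F|_X`. -/
theorem isBranched_restrict_closed {U V : Type*}
    [TopologicalSpace U] [T2Space U] [LocallyCompactSpace U]
    [TopologicalSpace V] [T2Space V] [LocallyCompactSpace V]
    (F : U → V) (ind : U → ℕ) (hF : IsBranched F ind)
    (Y : Set V) (hY : IsClosed Y) :
    IsBranched (fun x : F ⁻¹' Y => (⟨F x.1, x.2⟩ : Y)) (fun x : F ⁻¹' Y => ind x.1) :=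
  isBranched_restrict_closed_general F ind hF Y
end

section
/- Let M ⊆ ℂ be open, let F̃ : ℂ → ℂ be analytic on M, and let x ∈ M be a point at which F̃ is not locally constant, so that n := ind_{F̃}(x), the order of vanishing of z ↦ F̃(z) − F̃(x) at x, is a finite positive integer. Then there exist an open neighbourhood U ⊆ M of x, an open neighbourhood V of F̃(x), and maps g_i : V → U for i = 1,…,n such that: (1) F̃(g_i(v)) = v for all v ∈ V and all i; (2) g_i(F̃(x)) = x and g_i is continuous at the point F̃(x), for all i; (3) U = ⋃_{i=1}^{n} g_i(V); (4) for every u ∈ U, the order of vanishing of z ↦ F̃(z) − F̃(u) at u equals |{i ≤ n : u ∈ g_i(V)}|. In particular, every nonconstant holomorphic map is a branched function whose index function is the local order of vanishing. -/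
open Filter Topology

open scoped Classical in
/-- The order of vanishing of `z ↦ f z − f x` at `x`, for `f` analytic near `x`
(and junk value `0` otherwise).  For a holomorphic map this is the local index
`ind_f(x)`. -/
noncomputable def vanishingOrder (f : ℂ → ℂ) (x : ℂ) : ℕ∞ :=
  if h : AnalyticAt ℂ (fun z => f z - f x) x then analyticOrderAt (fun z => f z - f x) x else 0

/-!
Write `Ft z - Ft x = (z - x) ^ n * q z` with `q x ≠ 0` and choose an analytic `h` with
`h ^ n = q`. Then `φ z = (z - x) * h z` has `φ' x = h x ≠ 0`, so it is a local chart at `x` in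
which `Ft = Ft x + φ ^ n`. The `n` branches `v ↦ φ⁻¹ (ω ^ i * (v - Ft x) ^ (1 / n))`, `ω` a
primitive `n`-th root of unity, all pass through `x`; every other point `u` of the chart lies on
exactly one of them (the `n`-th roots of `φ u ^ n ≠ 0` are distinct), and there
`Ft' = n φ ^ (n - 1) φ' ≠ 0`, so the order is `1`.
-/

open Complex

noncomputable def nthRootBranch (ω : ℂ) (n i : ℕ) (t : ℂ) : ℂ := ω ^ i * t ^ (n⁻¹ : ℂ)

section nthRootBranch

variable {ω : ℂ} {n : ℕ}

lemma nthRootBranch_pow (hω : IsPrimitiveRoot ω n) (hn : n ≠ 0) (i : ℕ) (t : ℂ) :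
    nthRootBranch ω n i t ^ n = t := by
  rw [nthRootBranch, mul_pow, ← pow_mul, mul_comm i, pow_mul, hω.pow_eq_one, one_pow, one_mul,
    cpow_nat_inv_pow t hn]

lemma nthRootBranch_zero (hn : n ≠ 0) (i : ℕ) : nthRootBranch ω n i 0 = 0 := by
  simp [nthRootBranch, zero_cpow, hn]

lemma nthRootBranch_mem_ball (hω : IsPrimitiveRoot ω n) (hn : n ≠ 0) (i : ℕ) {ρ : ℝ}
    (hρ : 0 ≤ ρ) {t : ℂ} (ht : t ∈ Metric.ball 0 (ρ ^ n)) :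
    nthRootBranch ω n i t ∈ Metric.ball 0 ρ := by
  rw [mem_ball_zero_iff] at ht ⊢
  refine lt_of_pow_lt_pow_left₀ n hρ ?_
  rwa [← norm_pow, nthRootBranch_pow hω hn]

lemma continuousAt_nthRootBranch_zero (hn : n ≠ 0) (i : ℕ) :
    ContinuousAt (nthRootBranch ω n i) 0 :=
  continuousAt_const.mul <| continuousAt_cpow_const_of_re_pos (Or.inl le_rfl) <| by
    simpa using Nat.pos_of_ne_zero hn

lemma card_nthRootBranch_pow_eq (hω : IsPrimitiveRoot ω n) (hn : n ≠ 0) (w : ℂ) :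
    Nat.card {i : Fin n // nthRootBranch ω n i (w ^ n) = w} = if w = 0 then n else 1 := by
  have : NeZero n := ⟨hn⟩
  split_ifs with hw
  · subst hw
    simp [zero_pow hn, nthRootBranch_zero hn]
  set R := (w ^ n) ^ (n⁻¹ : ℂ)
  have hRn : R ^ n = w ^ n := cpow_nat_inv_pow _ hn
  have hR : R ≠ 0 := fun h => hw (pow_eq_zero_iff hn |>.mp (by rw [← hRn, h, zero_pow hn]))
  have hbranch (i : ℕ) : nthRootBranch ω n i (w ^ n) = w ↔ ω ^ i = w / R := by
    rw [nthRootBranch, eq_div_iff hR]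
  obtain ⟨i₀, hi₀, hωi₀⟩ := hω.eq_pow_of_pow_eq_one (ξ := w / R) <| by
    rw [div_pow, hRn, div_self (pow_ne_zero n hw)]
  rw [Nat.card_eq_one_iff_unique]
  refine ⟨⟨fun ⟨i, hi⟩ ⟨j, hj⟩ => ?_⟩, ⟨⟨⟨i₀, hi₀⟩, (hbranch i₀).mpr hωi₀⟩⟩⟩
  rw [hbranch] at hi hj
  exact Subtype.ext <| Fin.ext <| hω.pow_inj i.isLt j.isLt (hi.trans hj.symm)

end nthRootBranch

lemma AnalyticAt.exists_pow_eq {g : ℂ → ℂ} {x : ℂ} (hg : AnalyticAt ℂ g x) (hgx : g x ≠ 0)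
    {n : ℕ} (hn : n ≠ 0) : ∃ h : ℂ → ℂ, AnalyticAt ℂ h x ∧ ∀ z, h z ^ n = g z := by
  refine ⟨fun z => g x ^ (n⁻¹ : ℂ) * (g z / g x) ^ (n⁻¹ : ℂ), ?_, fun z => ?_⟩
  · refine analyticAt_const.mul <| (hg.fun_div analyticAt_const hgx).cpow analyticAt_const ?_
    rw [div_self hgx]
    exact one_mem_slitPlane
  · rw [mul_pow, cpow_nat_inv_pow _ hn, cpow_nat_inv_pow _ hn, mul_div_cancel₀ _ hgx]

lemma AnalyticAt.exists_eventuallyEq_add_pow {f : ℂ → ℂ} {x : ℂ} (hf : AnalyticAt ℂ f x) {n : ℕ}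
    (hn : n ≠ 0) (hord : analyticOrderAt (f · - f x) x = n) :
    ∃ φ : ℂ → ℂ, AnalyticAt ℂ φ x ∧ φ x = 0 ∧ deriv φ x ≠ 0 ∧ ∀ᶠ z in 𝓝 x, f z = f x + φ z ^ n := by
  obtain ⟨q, hq, hqx, hfq⟩ :=
    ((hf.fun_sub analyticAt_const).analyticOrderAt_eq_natCast (n := n)).mp hord
  obtain ⟨h, hh, hhq⟩ := hq.exists_pow_eq hqx hn
  have hhx : h x ≠ 0 := fun h0 => hqx (by rw [← hhq, h0, zero_pow hn])
  have hφ : HasDerivAt (fun z => (z - x) * h z) (h x) x := by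
    simpa using ((hasDerivAt_id x).sub_const x).fun_mul hh.differentiableAt.hasDerivAt
  refine ⟨fun z => (z - x) * h z, (analyticAt_id.sub analyticAt_const).mul hh, by simp,
    hφ.deriv ▸ hhx, ?_⟩
  filter_upwards [hfq] with z hz
  rw [mul_pow, hhq, ← smul_eq_mul, ← hz, add_sub_cancel]

lemma AnalyticAt.exists_openPartialHomeomorph_eq_add_pow {f : ℂ → ℂ} {x : ℂ}
    (hf : AnalyticAt ℂ f x) {n : ℕ} (hn : n ≠ 0) (hord : analyticOrderAt (f · - f x) x = n)
    {W : Set ℂ} (hW : W ∈ 𝓝 x) :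
    ∃ e : OpenPartialHomeomorph ℂ ℂ, x ∈ e.source ∧ e x = 0 ∧ e.source ⊆ W ∧
      ∀ z ∈ e.source, DifferentiableAt ℂ e z ∧ deriv e z ≠ 0 ∧ f z = f x + e z ^ n := by
  obtain ⟨φ, hφ, hφx, hφ', hfφ⟩ := hf.exists_eventuallyEq_add_pow hn hord
  obtain ⟨W₀, hW₀, hW₀open, hxW₀⟩ := eventually_nhds_iff.mp <|
    (hφ.eventually_analyticAt.and (hφ.deriv.continuousAt.eventually_ne hφ')).and
      (hfφ.and hW)
  let e := (hφ.hasStrictDerivAt.hasStrictFDerivAt_equiv hφ').toOpenPartialHomeomorph φ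
  have hxe : x ∈ e.source := HasStrictFDerivAt.mem_toOpenPartialHomeomorph_source _
  refine ⟨e.restrOpen W₀ hW₀open, ⟨hxe, hxW₀⟩, hφx, fun z hz => (hW₀ z hz.2).2.2,
    fun z hz => ?_⟩
  obtain ⟨⟨hφz, hφ'z⟩, hfz, -⟩ := hW₀ z hz.2
  exact ⟨hφz.differentiableAt, hφ'z, hfz⟩

lemma vanishingOrder_eq_one {f : ℂ → ℂ} {u : ℂ} (hf : AnalyticAt ℂ f u) (hf' : deriv f u ≠ 0) :
    vanishingOrder f u = 1 := by
  rw [vanishingOrder, dif_pos (hf.fun_sub analyticAt_const)]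
  exact hf.analyticOrderAt_sub_eq_one_of_deriv_ne_zero hf'

lemma vanishingOrder_eq_one_of_eventuallyEq_add_pow {f φ : ℂ → ℂ} {u c : ℂ} {n : ℕ} (hn : n ≠ 0)
    (hf : AnalyticAt ℂ f u) (hφ : DifferentiableAt ℂ φ u) (hφ' : deriv φ u ≠ 0) (hφu : φ u ≠ 0)
    (hfφ : ∀ᶠ z in 𝓝 u, f z = c + φ z ^ n) : vanishingOrder f u = 1 := by
  have hderiv : HasDerivAt f (n * φ u ^ (n - 1) * deriv φ u) u :=
    ((hφ.hasDerivAt.pow n).const_add c).congr_of_eventuallyEq hfφ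
  refine vanishingOrder_eq_one hf ?_
  rw [hderiv.deriv]
  exact mul_ne_zero (mul_ne_zero (Nat.cast_ne_zero.mpr hn) (pow_ne_zero _ hφu)) hφ'

lemma Set.eq_iUnion_image_of_card_ne_zero {α β ι : Type*} {U : Set α} {V : Set β}
    {g : ι → β → α} (hgU : ∀ i, ∀ v ∈ V, g i v ∈ U)
    (hcard : ∀ u ∈ U, Nat.card {i // u ∈ g i '' V} ≠ 0) : U = ⋃ i, g i '' V := by
  refine subset_antisymm (fun u hu => ?_) (Set.iUnion_subset fun i => ?_)
  · obtain ⟨i, hi⟩ := (Nat.card_ne_zero.mp (hcard u hu)).1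
    exact Set.mem_iUnion.mpr ⟨i, hi⟩
  · exact Set.image_subset_iff.mpr (hgU i)

theorem OpenPartialHomeomorph.exists_branches_of_eq_add_pow (e : OpenPartialHomeomorph ℂ ℂ)
    {x : ℂ} (hx : x ∈ e.source) (hex : e x = 0) {n : ℕ} (hn : n ≠ 0) {F : ℂ → ℂ}
    (hF : ∀ z ∈ e.source, F z = F x + e z ^ n) :
    ∃ (U V : Set ℂ) (g : Fin n → ℂ → ℂ),
      IsOpen U ∧ x ∈ U ∧ U ⊆ e.source ∧ IsOpen V ∧ F x ∈ V ∧
      (∀ i, ∀ v ∈ V, g i v ∈ U) ∧ (∀ i, ∀ v ∈ V, F (g i v) = v) ∧ (∀ i, g i (F x) = x) ∧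
      (∀ i, ContinuousWithinAt (g i) V (F x)) ∧
      ∀ u ∈ U, Nat.card {i // u ∈ g i '' V} = if u = x then n else 1 := by
  have h0 : (0 : ℂ) ∈ e.target := hex ▸ e.map_source hx
  have hsymm0 : e.symm 0 = x := hex ▸ e.left_inv hx
  obtain ⟨ρ, hρ, hball⟩ := Metric.isOpen_iff.mp e.open_target 0 h0
  have hω := isPrimitiveRoot_exp n hn
  set b := nthRootBranch (exp (2 * Real.pi * I / n)) n
  set U := e.symm '' Metric.ball 0 ρ
  set V := Metric.ball (F x) (ρ ^ n)
  set g : Fin n → ℂ → ℂ := fun i v => e.symm (b i (v - F x))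
  have hU : U = e.source ∩ e ⁻¹' Metric.ball 0 ρ := e.symm_image_eq_source_inter_preimage hball
  have hbV (i : ℕ) {v : ℂ} (hv : v ∈ V) : b i (v - F x) ∈ Metric.ball 0 ρ :=
    nthRootBranch_mem_ball hω hn i hρ.le (mem_ball_zero_iff.mpr (mem_ball_iff_norm.mp hv))
  have hgU (i : Fin n) (v : ℂ) (hv : v ∈ V) : g i v ∈ U := ⟨_, hbV i hv, rfl⟩
  have hFg (i : Fin n) (v : ℂ) (hv : v ∈ V) : F (g i v) = v := by
    rw [hF _ (e.map_target (hball (hbV i hv))), e.right_inv (hball (hbV i hv)),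
      nthRootBranch_pow hω hn, add_sub_cancel]
  have hmem {u : ℂ} (hu : u ∈ U) (i : Fin n) : u ∈ g i '' V ↔ b i (e u ^ n) = e u := by
    rw [hU] at hu
    constructor
    · rintro ⟨v, hv, rfl⟩
      rw [e.right_inv (hball (hbV i hv)), nthRootBranch_pow hω hn]
    · intro hbu
      refine ⟨F u, ?_, ?_⟩
      · rw [hF u hu.1, mem_ball_iff_norm, add_sub_cancel_left, norm_pow]
        exact pow_lt_pow_left₀ (mem_ball_zero_iff.mp hu.2) (norm_nonneg _) hn
      · simp only [g, hF u hu.1, add_sub_cancel_left, hbu, e.left_inv hu.1]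
  have hcard (u : ℂ) (hu : u ∈ U) : Nat.card {i // u ∈ g i '' V} = if u = x then n else 1 := by
    have hux : e u = 0 ↔ u = x := by
      rw [hU] at hu
      exact ⟨fun h => e.injOn hu.1 hx (h.trans hex.symm), fun h => h ▸ hex⟩
    rw [Nat.card_congr (Equiv.subtypeEquivRight (hmem hu)), card_nthRootBranch_pow_eq hω hn]
    simp only [hux]
  have hgx (i : Fin n) : g i (F x) = x := by
    simp only [g, b, sub_self, nthRootBranch_zero hn, hsymm0]
  have hgc (i : Fin n) : ContinuousAt (g i) (F x) :=
    (e.continuousAt_symm h0).comp_of_eq ((continuousAt_nthRootBranch_zero hn i).comp_of_eq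
      (continuousAt_id.sub continuousAt_const) (sub_self _))
      (by simp only [b, sub_self, nthRootBranch_zero hn])
  exact ⟨U, V, g, hU ▸ e.isOpen_inter_preimage Metric.isOpen_ball,
    ⟨0, Metric.mem_ball_self hρ, hsymm0⟩, hU ▸ Set.inter_subset_left, Metric.isOpen_ball,
    Metric.mem_ball_self (pow_pos hρ n), hgU, hFg, hgx, fun i => (hgc i).continuousWithinAt,
    hcard⟩

theorem holomorphic_isBranchedAt_general (M : Set ℂ) (hM : IsOpen M) (Ft : ℂ → ℂ)
    (hA : AnalyticOnNhd ℂ Ft M) (x : ℂ) (hx : x ∈ M)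
    (n : ℕ) (hord : vanishingOrder Ft x = (n : ℕ∞)) :
    ∃ (U : Set ℂ) (V : Set ℂ) (g : Fin n → ℂ → ℂ),
      IsOpen U ∧ x ∈ U ∧ U ⊆ M ∧ IsOpen V ∧ Ft x ∈ V ∧
      (∀ i, ∀ v ∈ V, g i v ∈ U) ∧
      (∀ i, ∀ v ∈ V, Ft (g i v) = v) ∧
      (∀ i, g i (Ft x) = x) ∧
      (∀ i, ContinuousWithinAt (g i) V (Ft x)) ∧
      (U = ⋃ i, g i '' V) ∧
      (∀ u ∈ U, vanishingOrder Ft u = (Nat.card {i : Fin n // u ∈ g i '' V} : ℕ∞)) := by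
  have hAx : AnalyticAt ℂ (Ft · - Ft x) x := (hA x hx).fun_sub analyticAt_const
  have hordx : analyticOrderAt (Ft · - Ft x) x = n := by
    rwa [vanishingOrder, dif_pos hAx] at hord
  have hn : n ≠ 0 := by
    rintro rfl
    exact hAx.analyticOrderAt_ne_zero.mpr (sub_self _) hordx
  obtain ⟨e, hxe, hex, heM, he⟩ :=
    (hA x hx).exists_openPartialHomeomorph_eq_add_pow hn hordx (hM.mem_nhds hx)
  obtain ⟨U, V, g, hU, hxU, hUe, hV, hxV, hgU, hFg, hgx, hgc, hcard⟩ :=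
    e.exists_branches_of_eq_add_pow hxe hex hn fun z hz => (he z hz).2.2
  have hUg : U = ⋃ i, g i '' V := Set.eq_iUnion_image_of_card_ne_zero hgU fun u hu => by
    rw [hcard u hu]
    split_ifs <;> simp [hn]
  refine ⟨U, V, g, hU, hxU, hUe.trans heM, hV, hxV, hgU, hFg, hgx, hgc, hUg, fun u hu => ?_⟩
  rw [hcard u hu]
  split_ifs with hux
  · rwa [hux]
  have heu : e u ≠ 0 := fun h => hux (e.injOn (hUe hu) hxe (h.trans hex.symm))
  obtain ⟨hediff, he', -⟩ := he u (hUe hu)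
  exact vanishingOrder_eq_one_of_eventuallyEq_add_pow hn (hA u (heM (hUe hu))) hediff he' heu <|
    Filter.eventually_of_mem (e.open_source.mem_nhds (hUe hu)) fun z hz => (he z hz).2.2

/-- **Holomorphic maps are branched.** If `F̃` is
analytic on an open set `M ⊆ ℂ` and `x ∈ M` is a point where the order of vanishing
`n` of `z ↦ F̃(z) − F̃(x)` is a finite positive integer, then `F̃` admits a system of
`n` inverse branches centered at `x`, whose branch counts compute the order of
vanishing at every point of the neighbourhood. -/
theorem holomorphic_isBranchedAt (M : Set ℂ) (hM : IsOpen M) (Ft : ℂ → ℂ)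
    (hA : AnalyticOnNhd ℂ Ft M) (x : ℂ) (hx : x ∈ M)
    (n : ℕ) (hn : 0 < n) (hord : vanishingOrder Ft x = (n : ℕ∞)) :
    ∃ (U : Set ℂ) (V : Set ℂ) (g : Fin n → ℂ → ℂ),
      IsOpen U ∧ x ∈ U ∧ U ⊆ M ∧ IsOpen V ∧ Ft x ∈ V ∧
      (∀ i, ∀ v ∈ V, g i v ∈ U) ∧
      (∀ i, ∀ v ∈ V, Ft (g i v) = v) ∧
      (∀ i, g i (Ft x) = x) ∧
      (∀ i, ContinuousWithinAt (g i) V (Ft x)) ∧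
      (U = ⋃ i, g i '' V) ∧
      (∀ u ∈ U, vanishingOrder Ft u = (Nat.card {i : Fin n // u ∈ g i '' V} : ℕ∞)) :=
  holomorphic_isBranchedAt_general M hM Ft hA x hx n hord
end

section
/- Let F̃ : ℂ → ℂ be an entire nonconstant function, let Y ⊆ ℂ be a closed set with no isolated points, let X := F̃⁻¹(Y), and let x ∈ X. Then ind_{F̃}(x) is the greatest natural number d with the following property: there exist points x_{n,i} ∈ X for n ∈ ℕ and 1 ≤ i ≤ d such that (i) for each i, x_{n,i} → x as n → ∞; (ii) for every n and all i, j, F̃(x_{n,i}) = F̃(x_{n,j}) and F̃(x_{n,i}) ≠ F̃(x); (iii) for each n the points x_{n,1}, …, x_{n,d} are pairwise distinct. That is, such points exist for d = ind_{F̃}(x), and any d admitting such points satisfies d ≤ ind_{F̃}(x). -/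
open Filter Topology

/-- There exist, for each `m`, `d` pairwise-distinct points of `X = F̃⁻¹(Y)` converging to
`x`, sharing a common `F̃`-value different from `F̃(x)`. -/
def HasApproxBranchPoints (Ft : ℂ → ℂ) (Y : Set ℂ) (x : ℂ) (d : ℕ) : Prop :=
  ∃ p : ℕ → Fin d → ℂ,
    (∀ m i, Ft (p m i) ∈ Y) ∧
    (∀ i, Tendsto (fun m => p m i) atTop (nhds x)) ∧
    (∀ m i j, Ft (p m i) = Ft (p m j)) ∧
    (∀ m i, Ft (p m i) ≠ Ft x) ∧
    (∀ m, Function.Injective fun i => p m i)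

/-!
Write `F̃ z - F̃ x = (z - x) ^ n * g z` with `g x ≠ 0`. Taking an `n`-th root of `g` gives a local
biholomorphism `φ z = (z - x) * g z ^ (1 / n)` with `φ x = 0` and `F̃ - F̃ x = φ ^ n` near `x`.
So the points near `x` on which `F̃` takes a given value `F̃ x + w` are the `φ`-preimages of the
`n`-th roots of `w`: there are at most `n` of them, and exactly `n` when `w ≠ 0` is small. Such
`w` with `F̃ x + w ∈ Y` exist arbitrarily close to `0` because `F̃ x` is not isolated in `Y`.
-/

theorem Fintype.card_le_of_injective_of_pow_eq {R ι : Type*} [CommRing R] [IsDomain R]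
    [Fintype ι] {n : ℕ} (hn : 0 < n) {z : ι → R} (hz : Function.Injective z) {w : R}
    (h : ∀ i, z i ^ n = w) : Fintype.card ι ≤ n := by
  classical
  calc Fintype.card ι ≤ (Polynomial.nthRoots n w).toFinset.card :=
        Finset.card_le_card_of_injOn z
          (fun i _ => Multiset.mem_toFinset.2 ((Polynomial.mem_nthRoots hn).2 (h i))) hz.injOn
    _ ≤ Multiset.card (Polynomial.nthRoots n w) := Multiset.toFinset_card_le _
    _ ≤ n := Polynomial.card_nthRoots n w

theorem exists_seq_tendsto_zero_add_pow_mem {𝕜 : Type*} [NormedField 𝕜] [IsAlgClosed 𝕜]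
    {Y : Set 𝕜} {y : 𝕜} (hy : y ∈ closure (Y \ {y})) {n : ℕ} (hn : n ≠ 0) :
    ∃ w : ℕ → 𝕜, Tendsto w atTop (𝓝 0) ∧ ∀ m, w m ≠ 0 ∧ y + w m ^ n ∈ Y := by
  obtain ⟨v, hvY, hv⟩ := mem_closure_iff_seq_limit.1 hy
  choose w hw using fun m => IsAlgClosed.exists_pow_nat_eq (v m - y) (Nat.pos_of_ne_zero hn)
  refine ⟨w, ?_, fun m => ⟨?_, by simpa [hw m] using (hvY m).1⟩⟩
  · rw [Metric.tendsto_atTop] at hv ⊢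
    intro ε hε
    obtain ⟨N, hN⟩ := hv (ε ^ n) (pow_pos hε n)
    refine ⟨N, fun m hm => ?_⟩
    rw [dist_zero_right]
    refine lt_of_pow_lt_pow_left₀ n hε.le ?_
    rw [← norm_pow, hw m, ← dist_eq_norm]
    exact hN m hm
  · intro h0
    have h := hw m
    rw [h0, zero_pow hn, eq_comm, sub_eq_zero] at h
    exact (hvY m).2 h

theorem AnalyticAt.exists_analyticAt_pow_eq {g : ℂ → ℂ} {x : ℂ} (hg : AnalyticAt ℂ g x)
    (hgx : g x ≠ 0) {n : ℕ} (hn : n ≠ 0) :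
    ∃ r : ℂ → ℂ, AnalyticAt ℂ r x ∧ ∀ z, r z ^ n = g z := by
  obtain ⟨c, hc⟩ := IsAlgClosed.exists_pow_nat_eq (g x) (Nat.pos_of_ne_zero hn)
  refine ⟨fun z => c * (g z / g x) ^ (n⁻¹ : ℂ), ?_, fun z => ?_⟩
  · refine analyticAt_const.mul ((hg.fun_div analyticAt_const hgx).cpow analyticAt_const ?_)
    rw [div_self hgx]
    exact Complex.one_mem_slitPlane
  · rw [mul_pow, Complex.cpow_nat_inv_pow _ hn, hc, mul_div_cancel₀ _ hgx]

theorem AnalyticAt.exists_hasStrictDerivAt_sub_eq_pow {f : ℂ → ℂ} {x : ℂ} {n : ℕ}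
    (hf : AnalyticAt ℂ f x) (hord : analyticOrderAt (fun z => f z - f x) x = n) :
    ∃ φ : ℂ → ℂ, ∃ c ≠ 0, HasStrictDerivAt φ c x ∧ φ x = 0 ∧
      ∀ᶠ z in 𝓝 x, f z - f x = φ z ^ n := by
  obtain ⟨g, hg, hgx, hfg⟩ := (hf.fun_sub analyticAt_const).analyticOrderAt_eq_natCast.1 hord
  have hn : n ≠ 0 := by
    rintro rfl
    simpa [eq_comm, hgx] using hfg.self_of_nhds
  obtain ⟨r, hr, hrg⟩ := hg.exists_analyticAt_pow_eq hgx hn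
  refine ⟨fun z => (z - x) * r z, r x, fun h => hgx (by rw [← hrg, h, zero_pow hn]), ?_,
    by simp, ?_⟩
  · have hsub : HasStrictDerivAt (fun z => z - x) 1 x := (hasStrictDerivAt_id x).sub_const x
    simpa using hsub.fun_mul hr.hasStrictDerivAt
  · filter_upwards [hfg] with z hz
    rw [hz, mul_pow, hrg, smul_eq_mul]

theorem HasStrictDerivAt.exists_openPartialHomeomorph {𝕜 : Type*} [NontriviallyNormedField 𝕜]
    [CompleteSpace 𝕜] {φ : 𝕜 → 𝕜} {c x : 𝕜} (hφ : HasStrictDerivAt φ c x) (hc : c ≠ 0)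
    {s : Set 𝕜} (hs : s ∈ 𝓝 x) :
    ∃ e : OpenPartialHomeomorph 𝕜 𝕜, x ∈ e.source ∧ e.source ⊆ s ∧ Set.EqOn e φ e.source := by
  obtain ⟨t, hts, ht, hxt⟩ := mem_nhds_iff.1 hs
  have hφ' := hφ.hasStrictFDerivAt_equiv hc
  refine ⟨(hφ'.toOpenPartialHomeomorph φ).restrOpen t ht, ?_, ?_, fun z _ => rfl⟩
  · rw [OpenPartialHomeomorph.restrOpen_source]
    exact ⟨hφ'.mem_toOpenPartialHomeomorph_source, hxt⟩
  · rw [OpenPartialHomeomorph.restrOpen_source]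
    exact Set.inter_subset_right.trans hts

theorem AnalyticAt.exists_openPartialHomeomorph_sub_eq_pow {f : ℂ → ℂ} {x : ℂ} {n : ℕ}
    (hf : AnalyticAt ℂ f x) (hord : analyticOrderAt (fun z => f z - f x) x = n) :
    ∃ e : OpenPartialHomeomorph ℂ ℂ, x ∈ e.source ∧ e x = 0 ∧
      ∀ z ∈ e.source, f z - f x = e z ^ n := by
  obtain ⟨φ, c, hc, hφ, hφx, hfφ⟩ := hf.exists_hasStrictDerivAt_sub_eq_pow hord
  obtain ⟨e, hx, hes, heφ⟩ := hφ.exists_openPartialHomeomorph hc hfφ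
  exact ⟨e, hx, (heφ hx).trans hφx, fun z hz => by rw [heφ hz]; exact hes hz⟩

theorem hasApproxBranchPoints_of_eventually {f : ℂ → ℂ} {Y : Set ℂ} {x : ℂ} {d : ℕ}
    (p : ℕ → Fin d → ℂ) (hp : ∀ i, Tendsto (fun m => p m i) atTop (𝓝 x))
    (hev : ∀ᶠ m in atTop, (∀ i, f (p m i) ∈ Y) ∧ (∀ i j, f (p m i) = f (p m j)) ∧
      (∀ i, f (p m i) ≠ f x) ∧ Function.Injective (p m)) :
    HasApproxBranchPoints f Y x d := by
  obtain ⟨N, hN⟩ := eventually_atTop.1 hev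
  exact ⟨fun m => p (m + N), fun m => (hN _ (Nat.le_add_left N m)).1,
    fun i => (hp i).comp (tendsto_add_atTop_nat N), fun m => (hN _ (Nat.le_add_left N m)).2.1,
    fun m => (hN _ (Nat.le_add_left N m)).2.2.1, fun m => (hN _ (Nat.le_add_left N m)).2.2.2⟩

theorem HasApproxBranchPoints.le_of_openPartialHomeomorph {f : ℂ → ℂ} {Y : Set ℂ} {x : ℂ}
    {d n : ℕ} (h : HasApproxBranchPoints f Y x d) (e : OpenPartialHomeomorph ℂ ℂ)
    (hx : x ∈ e.source) (hf : ∀ z ∈ e.source, f z - f x = e z ^ n) : d ≤ n := by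
  obtain ⟨p, -, hp, hpeq, -, hpinj⟩ := h
  have hn : 0 < n := Nat.pos_of_ne_zero <| by
    rintro rfl
    simpa using hf x hx
  obtain ⟨m, hm⟩ :=
    (eventually_all.2 fun i => (hp i).eventually (e.open_source.mem_nhds hx)).exists
  rcases Nat.eq_zero_or_pos d with rfl | hd
  · exact Nat.zero_le n
  have hinj : Function.Injective fun i => e (p m i) :=
    fun i j hij => hpinj m (e.injOn (hm i) (hm j) hij)
  simpa using Fintype.card_le_of_injective_of_pow_eq hn hinj
    (w := f (p m ⟨0, hd⟩) - f x) fun i => by rw [← hf _ (hm i), hpeq m i]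

theorem hasApproxBranchPoints_of_openPartialHomeomorph {f : ℂ → ℂ} {Y : Set ℂ} {x : ℂ} {n : ℕ}
    (hY : f x ∈ closure (Y \ {f x})) (e : OpenPartialHomeomorph ℂ ℂ) (hx : x ∈ e.source)
    (hex : e x = 0) (hf : ∀ z ∈ e.source, f z - f x = e z ^ n) :
    HasApproxBranchPoints f Y x n := by
  have hn : n ≠ 0 := by
    rintro rfl
    simpa using hf x hx
  obtain ⟨w, hw, hwY⟩ := exists_seq_tendsto_zero_add_pow_mem hY hn
  have hζ := Complex.isPrimitiveRoot_exp n hn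
  set ζ := Complex.exp (2 * Real.pi * Complex.I / n)
  set u : ℕ → Fin n → ℂ := fun m i => ζ ^ (i : ℕ) * w m
  have hu : ∀ i, Tendsto (fun m => u m i) atTop (𝓝 0) := fun i => by
    simpa using hw.const_mul (ζ ^ (i : ℕ))
  have hu_pow : ∀ m i, u m i ^ n = w m ^ n := fun m i => by
    rw [mul_pow, ← pow_mul, mul_comm (i : ℕ) n, pow_mul, hζ.pow_eq_one, one_pow, one_mul]
  have he_symm : Tendsto e.symm (𝓝 0) (𝓝 x) := by
    have h := (e.continuousAt_symm (e.map_source hx)).tendsto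
    rwa [e.left_inv hx, hex] at h
  have htarget : e.target ∈ 𝓝 0 := hex ▸ e.open_target.mem_nhds (e.map_source hx)
  refine hasApproxBranchPoints_of_eventually (fun m i => e.symm (u m i))
    (fun i => he_symm.comp (hu i)) ?_
  filter_upwards [eventually_all.2 fun i => (hu i).eventually htarget] with m hm
  have hfu : ∀ i, f (e.symm (u m i)) = f x + w m ^ n := fun i => by
    rw [← hu_pow m i, ← e.right_inv (hm i), ← hf _ (e.map_target (hm i)), e.right_inv (hm i)]
    ring
  refine ⟨fun i => hfu i ▸ (hwY m).2, fun i j => by rw [hfu, hfu], fun i => ?_,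
    fun i j hij => ?_⟩
  · rw [hfu, Ne, add_eq_left]
    exact pow_ne_zero n (hwY m).1
  · have huij : u m i = u m j := by
      rw [← e.right_inv (hm i), ← e.right_inv (hm j)]
      exact congrArg e hij
    exact Fin.ext (hζ.pow_inj i.2 j.2 (mul_right_cancel₀ (hwY m).1 huij))

theorem vanishingOrder_eq_sup_approxBranchPoints_general (Ft : ℂ → ℂ)
    (hD : Differentiable ℂ Ft)
    (Y : Set ℂ) (hYperf : ∀ y ∈ Y, y ∈ closure (Y \ {y}))
    (x : ℂ) (hx : Ft x ∈ Y)
    (n : ℕ) (hord : vanishingOrder Ft x = (n : ℕ∞)) :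
    HasApproxBranchPoints Ft Y x n ∧
      ∀ d : ℕ, HasApproxBranchPoints Ft Y x d → d ≤ n := by
  have hFt : AnalyticAt ℂ Ft x := hD.analyticAt x
  rw [vanishingOrder, dif_pos (hFt.fun_sub analyticAt_const)] at hord
  obtain ⟨e, hxe, hex, hFte⟩ := hFt.exists_openPartialHomeomorph_sub_eq_pow hord
  exact ⟨hasApproxBranchPoints_of_openPartialHomeomorph (hYperf _ hx) e hxe hex hFte,
    fun d hd => hd.le_of_openPartialHomeomorph e hxe hFte⟩

/-- **Lemma 7.1 of the paper (index characterization).** Let `F̃` be entire and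
nonconstant, `Y ⊆ ℂ` closed with no isolated points, `X := F̃⁻¹(Y)` and `x ∈ X`.
Then `ind_{F̃}(x)` (the order of vanishing of `z ↦ F̃(z) − F̃(x)` at `x`) is the
greatest `d` for which `d` approximating branch points exist. -/
theorem vanishingOrder_eq_sup_approxBranchPoints (Ft : ℂ → ℂ)
    (hD : Differentiable ℂ Ft) (hnc : ∃ a b : ℂ, Ft a ≠ Ft b)
    (Y : Set ℂ) (hY : IsClosed Y) (hYperf : ∀ y ∈ Y, y ∈ closure (Y \ {y}))
    (x : ℂ) (hx : Ft x ∈ Y)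
    (n : ℕ) (hord : vanishingOrder Ft x = (n : ℕ∞)) :
    HasApproxBranchPoints Ft Y x n ∧
      ∀ d : ℕ, HasApproxBranchPoints Ft Y x d → d ≤ n :=
  vanishingOrder_eq_sup_approxBranchPoints_general Ft hD Y hYperf x hx n hord
end

section
/- Let X be a set and σ : X → X a map such that every point of X is eventually periodic: for each x ∈ X there exist k ≥ 0 and n ≥ 1 with σ^{k+n}(x) = σ^{k}(x). Let η : ℤ[X] → ℤ[X] be the group homomorphism determined by η(δ_x) = δ_x − δ_{σ(x)}. Then the kernel of η is the free abelian group generated by the elements e_P := ∑_{x∈P} δ_x, where P ranges over the cycles of σ: the family {e_P : P a cycle of σ} is ℤ-linearly independent and its ℤ-span equals ker η. -/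
/-- `P` is a cycle (periodic orbit) of `σ`: the forward orbit of a periodic point. -/
def IsCycle {X : Type*} (σ : X → X) (P : Finset X) : Prop :=
  ∃ p ∈ P, (∃ n : ℕ, 0 < n ∧ σ^[n] p = p) ∧ ∀ x : X, x ∈ P ↔ ∃ k : ℕ, σ^[k] p = x

/-!
Write `η = id - σ_*`, so `ker η` consists of the `σ_*`-invariant `f`. Pushing `f` forward far
enough makes every point of its finite support periodic, so an invariant `f` is supported on
periodic points; `σ` is injective there, hence `f` is constant along each cycle, and subtracting
`f x • e_P` for the cycle `P` through a point `x` of the support shrinks the support. The `e_P`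
are indicators of pairwise disjoint nonempty sets, hence independent.
-/

open Function Finsupp

section

variable {X : Type*} {σ : X → X} {P Q : Finset X} {x y : X}

namespace IsCycle

theorem mem_iff_exists_iterate_eq (hP : IsCycle σ P) (hx : x ∈ P) :
    y ∈ P ↔ ∃ k, σ^[k] x = y := by
  obtain ⟨p, -, ⟨n, hn, hpn⟩, hmem⟩ := hP
  obtain ⟨j, rfl⟩ := (hmem x).1 hx
  obtain ⟨m, rfl⟩ : ∃ m, n = m + 1 := ⟨n - 1, by omega⟩
  have hback : σ^[m * j] (σ^[j] p) = p := by
    rw [← iterate_add_apply, ← Nat.succ_mul]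
    exact ((show IsPeriodicPt σ (m + 1) p from hpn).mul_const j).eq
  rw [hmem]
  constructor
  · rintro ⟨l, rfl⟩
    exact ⟨l + m * j, by rw [iterate_add_apply, hback]⟩
  · rintro ⟨k, rfl⟩
    exact ⟨k + j, iterate_add_apply σ k j p⟩

theorem subset_periodicPts (hP : IsCycle σ P) : (P : Set X) ⊆ periodicPts σ := by
  obtain ⟨p, -, ⟨n, hn, hpn⟩, hmem⟩ := hP
  intro x hx
  obtain ⟨k, rfl⟩ := (hmem x).1 hx
  exact ⟨n, hn, IsPeriodicPt.apply_iterate hpn k⟩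

theorem eq_of_mem (hP : IsCycle σ P) (hQ : IsCycle σ Q) (hxP : x ∈ P) (hxQ : x ∈ Q) :
    P = Q :=
  Finset.ext fun _ => (hP.mem_iff_exists_iterate_eq hxP).trans
    (hQ.mem_iff_exists_iterate_eq hxQ).symm

theorem nonempty (hP : IsCycle σ P) : P.Nonempty :=
  let ⟨p, hp, _⟩ := hP; ⟨p, hp⟩

theorem image_eq [DecidableEq X] (hP : IsCycle σ P) : P.image σ = P := by
  refine Finset.Subset.antisymm (fun y hy => ?_) fun y hy => ?_
  · obtain ⟨x, hx, rfl⟩ := Finset.mem_image.1 hy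
    exact (hP.mem_iff_exists_iterate_eq hx).2 ⟨1, rfl⟩
  · obtain ⟨n, hn, hyn⟩ := hP.subset_periodicPts hy
    refine Finset.mem_image.2 ⟨σ^[n - 1] y, (hP.mem_iff_exists_iterate_eq hy).2 ⟨n - 1, rfl⟩, ?_⟩
    rw [← iterate_succ_apply' σ, Nat.succ_eq_add_one, Nat.sub_add_cancel hn, hyn.eq]

end IsCycle

theorem exists_isCycle_mem (hx : x ∈ periodicPts σ) : ∃ P, IsCycle σ P ∧ x ∈ P := by
  classical
  obtain ⟨n, hn, hxn⟩ := hx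
  have hx_mem : x ∈ (Finset.range n).image (σ^[·] x) :=
    Finset.mem_image.2 ⟨0, Finset.mem_range.2 hn, rfl⟩
  refine ⟨_, ⟨x, hx_mem, ⟨n, hn, hxn⟩, fun y => ⟨fun hy => ?_, ?_⟩⟩, hx_mem⟩
  · obtain ⟨k, -, rfl⟩ := Finset.mem_image.1 hy
    exact ⟨k, rfl⟩
  · rintro ⟨k, rfl⟩
    exact Finset.mem_image.2 ⟨k % n, Finset.mem_range.2 (k.mod_lt hn), hxn.iterate_mod_apply k⟩

namespace Finsupp

variable {R : Type*}

theorem sum_single_one_apply [Semiring R] [DecidableEq X] (s : Finset X) (y : X) :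
    (∑ x ∈ s, single x (1 : R)) y = if y ∈ s then 1 else 0 := by
  simp [finsetSum_apply, single_apply]

theorem linearIndependent_sum_single_one [Semiring R] {ι : Type*} {s : ι → Finset X}
    (hs : Pairwise (Disjoint on s)) (hne : ∀ i, (s i).Nonempty) :
    LinearIndependent R fun i => ∑ x ∈ s i, single x (1 : R) := by
  classical
  refine linearIndependent_iff'ₛ.2 fun t c d hcd i hi => ?_
  obtain ⟨p, hp⟩ := hne i
  have eval_p (c : ι → R) : (∑ j ∈ t, c j • ∑ x ∈ s j, single x (1 : R)) p = c i := by
    rw [finsetSum_apply]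
    simp only [smul_apply, sum_single_one_apply, smul_eq_mul, mul_ite, mul_one, mul_zero]
    rw [Finset.sum_eq_single_of_mem i hi fun j _ hji =>
      if_neg (Finset.disjoint_left.1 (hs hji.symm) hp), if_pos hp]
  rw [← eval_p c, hcd, eval_p]

theorem mapDomain_iterate_eq_self {M : Type*} [AddCommMonoid M] {f : X →₀ M}
    (hf : mapDomain σ f = f) (m : ℕ) : mapDomain σ^[m] f = f := by
  induction m with
  | zero => exact mapDomain_id
  | succ m ih => rw [iterate_succ', mapDomain_comp, ih, hf]

end Finsupp

noncomputable def cycleSum (R : Type*) [Semiring R] (σ : X → X)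
    (P : {P : Finset X // IsCycle σ P}) : X →₀ R :=
  ∑ x ∈ P.1, single x 1

section Semiring

variable {R : Type*} [Semiring R]

theorem cycleSum_apply [DecidableEq X] (P : {P : Finset X // IsCycle σ P}) (y : X) :
    cycleSum R σ P y = if y ∈ P.1 then 1 else 0 :=
  sum_single_one_apply P.1 y

theorem linearIndependent_cycleSum : LinearIndependent R (cycleSum R σ) :=
  linearIndependent_sum_single_one
    (fun P Q hPQ => Finset.disjoint_left.2 fun _ hxP hxQ =>
      hPQ (Subtype.ext (P.2.eq_of_mem Q.2 hxP hxQ)))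
    fun P => P.2.nonempty

theorem mapDomain_cycleSum (P : {P : Finset X // IsCycle σ P}) :
    mapDomain σ (cycleSum R σ P) = cycleSum R σ P := by
  classical
  have hinj : Set.InjOn σ P.1 := (bijOn_periodicPts (f := σ)).injOn.mono P.2.subset_periodicPts
  rw [cycleSum, mapDomain_finsetSum]
  simp only [mapDomain_single]
  rw [← Finset.sum_image (f := fun y => single y (1 : R)) hinj, P.2.image_eq]

end Semiring

section FixedPoints

variable {M : Type*} [AddCommMonoid M] {f : X →₀ M}

theorem support_subset_periodicPts (hσ : ∀ x, ∃ k, σ^[k] x ∈ periodicPts σ)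
    (hf : mapDomain σ f = f) : (f.support : Set X) ⊆ periodicPts σ := by
  classical
  choose k hk using hσ
  intro z hz
  rw [Finset.mem_coe, ← mapDomain_iterate_eq_self hf (f.support.sup k)] at hz
  obtain ⟨y, hy, rfl⟩ := Finset.mem_image.1 (mapDomain_support hz)
  rw [← Nat.sub_add_cancel (Finset.le_sup hy), iterate_add_apply]
  exact (bijOn_periodicPts (f := σ)).mapsTo.iterate _ (hk y)

theorem apply_iterate_eq_of_mapDomain_eq (hsupp : (f.support : Set X) ⊆ periodicPts σ)
    (hf : mapDomain σ f = f) (hx : x ∈ periodicPts σ) (k : ℕ) : f (σ^[k] x) = f x := by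
  have hbij := bijOn_periodicPts (f := σ)
  induction k with
  | zero => rfl
  | succ k ih =>
    rw [iterate_succ_apply', ← ih]
    conv_lhs => rw [← hf]
    exact mapDomain_apply' _ f hsupp hbij.injOn (hbij.mapsTo.iterate k hx)

end FixedPoints

section Ring

variable {R : Type*} [Ring R]

theorem mem_ker_iff_mapDomain_eq {η : (X →₀ R) →ₗ[R] (X →₀ R)}
    (hη : ∀ x, η (single x 1) = single x 1 - single (σ x) 1) {f : X →₀ R} :
    f ∈ LinearMap.ker η ↔ mapDomain σ f = f := by
  have hη_eq : η = LinearMap.id - lmapDomain R R σ :=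
    Finsupp.basisSingleOne.ext fun x => by simp [hη]
  rw [LinearMap.mem_ker, hη_eq, LinearMap.sub_apply, sub_eq_zero, eq_comm]
  rfl

theorem mem_span_range_cycleSum_of_mapDomain_eq (hσ : ∀ x, ∃ k, σ^[k] x ∈ periodicPts σ)
    {f : X →₀ R} (hf : mapDomain σ f = f) :
    f ∈ Submodule.span R (Set.range (cycleSum R σ)) := by
  classical
  induction hn : f.support.card using Nat.strong_induction_on generalizing f with
  | _ n ih =>
  obtain h0 | ⟨x, hx⟩ := f.support.eq_empty_or_nonempty
  · rw [support_eq_empty.1 h0]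
    exact Submodule.zero_mem _
  have hsupp := support_subset_periodicPts hσ hf
  obtain ⟨P, hP, hxP⟩ := exists_isCycle_mem (hsupp hx)
  set e := cycleSum R σ ⟨P, hP⟩
  set g := f - f x • e
  have hg_apply (y : X) : g y = if y ∈ P then 0 else f y := by
    simp only [g, e, Finsupp.sub_apply, Finsupp.smul_apply, cycleSum_apply, smul_eq_mul]
    split_ifs with hy
    · obtain ⟨k, rfl⟩ := (hP.mem_iff_exists_iterate_eq hxP).1 hy
      rw [apply_iterate_eq_of_mapDomain_eq hsupp hf (hsupp hx), mul_one, sub_self]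
    · rw [mul_zero, sub_zero]
  have hg_fix : mapDomain σ g = g := by
    change lmapDomain R R σ (f - f x • e) = g
    rw [map_sub, map_smul, lmapDomain_apply, lmapDomain_apply, hf, mapDomain_cycleSum]
  have hg_support : g.support ⊂ f.support := by
    refine (Finset.ssubset_iff_of_subset fun y hy => ?_).2 ⟨x, hx, ?_⟩
    · rw [mem_support_iff, hg_apply] at hy
      split_ifs at hy
      exacts [absurd rfl hy, mem_support_iff.2 hy]
    · rw [mem_support_iff, hg_apply, if_pos hxP, not_not]
  have hg_mem := ih _ (hn ▸ Finset.card_lt_card hg_support) hg_fix rfl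
  rw [← sub_add_cancel f (f x • e)]
  exact add_mem hg_mem (Submodule.smul_mem _ _ (Submodule.subset_span ⟨_, rfl⟩))

end Ring

end

/-- **Kernel computation (cf. Corollary 8.4 of the paper).** Let `σ : X → X` be a map
all of whose points are eventually periodic, and let `η : ℤ[X] → ℤ[X]` be the
(ℤ-linear) homomorphism determined by `η(δ_x) = δ_x − δ_{σ(x)}`.  Then the elements
`e_P = ∑_{x ∈ P} δ_x`, for `P` a cycle of `σ`, are ℤ-linearly independent and their
ℤ-span is exactly `ker η`. -/
theorem ker_eta_eq_span_cycles {X : Type*} (σ : X → X)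
    (hep : ∀ x : X, ∃ k n : ℕ, 0 < n ∧ σ^[k + n] x = σ^[k] x)
    (η : (X →₀ ℤ) →ₗ[ℤ] (X →₀ ℤ))
    (hη : ∀ x : X, η (Finsupp.single x 1) =
      Finsupp.single x 1 - Finsupp.single (σ x) 1) :
    LinearIndependent ℤ (fun P : {P : Finset X // IsCycle σ P} =>
      ∑ x ∈ P.1, Finsupp.single x (1 : ℤ)) ∧
    LinearMap.ker η = Submodule.span ℤ
      (Set.range fun P : {P : Finset X // IsCycle σ P} =>
        ∑ x ∈ P.1, Finsupp.single x (1 : ℤ)) := by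
  have hσ (x : X) : ∃ k, σ^[k] x ∈ periodicPts σ := by
    obtain ⟨k, n, hn, hkn⟩ := hep x
    exact ⟨k, n, hn, by rw [IsPeriodicPt, IsFixedPt, ← iterate_add_apply, add_comm, hkn]⟩
  refine ⟨linearIndependent_cycleSum, le_antisymm (fun f hf => ?_) (Submodule.span_le.2 ?_)⟩
  · exact mem_span_range_cycleSum_of_mapDomain_eq hσ ((mem_ker_iff_mapDomain_eq hη).1 hf)
  · rintro _ ⟨P, rfl⟩
    exact (mem_ker_iff_mapDomain_eq hη).2 (mapDomain_cycleSum P)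
end
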